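/- arXiv:2008.13310 — 11 statements merged into one kernel-verified Lean document; each statement's English description precedes it below -/
import Mathlib

section
/- Let T be a bounded operator on a Hilbert space H with ‖Tx‖ ≥ ‖x‖ for all x, and let 0 < ε < 1. Then the closed linear span of the kernels ker(T*ⁿ) for n ≥ 1 equals the closed linear span of the eigenspaces ker(T* - λ̄) over all λ with |λ| < ε. -/
/-!
Taking orthogonal complements, and using `(ker A†)ᗮ = range A` for the operators `Tⁿ` and
`T - λ` (bounded below, hence with closed range), the claim becomes
`⋂_{n ≥ 1} range Tⁿ = ⋂_{|λ| < ε} range (T - λ)`.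

If `y = Tⁿ xₙ` for every `n`, the backward orbit `(xₙ)` is bounded by `‖y‖` and the series
`∑ λᵏ x_{k+1}` solves `(T - λ) z = y`. Conversely, if `y ∈ range (T - λ)` for all `|λ| < ε`, write
`y = T z`. For `λ ≠ 0` the resolvent identity puts `z` in `range (T - λ)`, with preimages bounded
uniformly in `λ`, so `z` is a limit of points of the closed subspace `range T`. Thus `z` satisfies
the same hypothesis as `y`, and induction gives `y ∈ range Tⁿ`.
-/

open ContinuousLinearMap Filter Topology

theorem Module.End.mem_range_sub_smul_of_apply_eq {K V : Type*} [Field K] [AddCommGroup V]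
    [Module K V] (T : Module.End K V) {l : K} (hl : l ≠ 0) {y z w : V}
    (hz : T z = y) (hw : (T - l • 1) w = y) : z ∈ LinearMap.range (T - l • 1) := by
  refine ⟨l⁻¹ • (w - z), ?_⟩
  simp only [LinearMap.sub_apply, LinearMap.smul_apply, Module.End.one_apply] at hw ⊢
  rw [map_smul, map_sub, hz, ← hw, sub_sub_cancel, smul_smul, inv_mul_cancel₀ hl, one_smul,
    smul_smul, mul_inv_cancel₀ hl, one_smul, sub_sub_cancel]

namespace ContinuousLinearMap

section NormedField

variable {𝕜 E : Type*} [NormedField 𝕜] [NormedAddCommGroup E] [NormedSpace 𝕜 E]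
  {T : E →L[𝕜] E}

theorem isClosed_range_of_mul_norm_le [CompleteSpace E] {A : E →L[𝕜] E} {c : ℝ} (hc : 0 < c)
    (h : ∀ x, c * ‖x‖ ≤ ‖A x‖) : IsClosed (A.range : Set E) := by
  obtain ⟨K, hK⟩ := antilipschitzWith_iff_exists_mul_le_norm.mpr ⟨c, hc, h⟩
  rw [LinearMap.coe_range]
  exact hK.isClosed_range A.uniformContinuous

theorem norm_le_norm_pow_apply (hT : ∀ x, ‖x‖ ≤ ‖T x‖) (n : ℕ) (x : E) :
    ‖x‖ ≤ ‖(T ^ n) x‖ := by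
  induction n generalizing x with
  | zero => simp
  | succ n ih => exact (hT x).trans (ih (T x))

theorem mul_norm_le_norm_sub_smul_apply (hT : ∀ x, ‖x‖ ≤ ‖T x‖) (l : 𝕜) (x : E) :
    (1 - ‖l‖) * ‖x‖ ≤ ‖(T - l • 1) x‖ := by
  calc (1 - ‖l‖) * ‖x‖ ≤ ‖T x‖ - ‖l • x‖ := by rw [norm_smul]; linarith [hT x]
    _ ≤ ‖(T - l • 1) x‖ := norm_sub_norm_le _ _

theorem mem_range_sub_smul_of_forall_mem_range_pow [CompleteSpace E] (hT : ∀ x, ‖x‖ ≤ ‖T x‖)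
    {y : E} (hy : ∀ n, y ∈ (T ^ n).range) {l : 𝕜} (hl : ‖l‖ < 1) : y ∈ (T - l • 1).range := by
  choose x hx using hy
  have hx_bound (n : ℕ) : ‖x n‖ ≤ ‖y‖ := hx n ▸ norm_le_norm_pow_apply hT n (x n)
  simp only [coe_coe] at hx
  have hTx (n : ℕ) : T (x (n + 1)) = x n := by
    have h := norm_le_norm_pow_apply hT n (T (x (n + 1)) - x n)
    rwa [map_sub, ← mul_apply_eq_comp, ← pow_succ, hx, hx, sub_self, norm_zero, norm_le_zero_iff,
      sub_eq_zero] at h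
  have hsummable (m : ℕ) : Summable fun k => l ^ k • x (k + m) :=
    .of_norm_bounded ((summable_geometric_of_lt_one (norm_nonneg l) hl).mul_right ‖y‖)
      fun k => by rw [norm_smul, norm_pow]; gcongr; exact hx_bound _
  have hsummable₀ : Summable fun k => l ^ k • x k := by simpa using hsummable 0
  -- `(T - l) z` telescopes to `x 0 = y`
  refine ⟨∑' k, l ^ k • x (k + 1), ?_⟩
  have hTz : T (∑' k, l ^ k • x (k + 1)) = ∑' k, l ^ k • x k := by
    rw [T.map_tsum (hsummable 1)]
    simp only [map_smul, hTx]
  have hlz : l • ∑' k, l ^ k • x (k + 1) = ∑' k, l ^ (k + 1) • x (k + 1) := by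
    rw [← (hsummable 1).tsum_const_smul l]
    simp only [smul_smul, pow_succ']
  rw [coe_coe, sub_apply, smul_apply, one_apply_eq_self, hTz, hlz, hsummable₀.tsum_eq_zero_add]
  simpa using hx 0

end NormedField

section NontriviallyNormedField

variable {𝕜 E : Type*} [NontriviallyNormedField 𝕜] [NormedAddCommGroup E] [NormedSpace 𝕜 E]
  [CompleteSpace E] {T : E →L[𝕜] E}

theorem mem_range_of_eventually_mem_range_sub_smul (hT : ∀ x, ‖x‖ ≤ ‖T x‖) {z : E}
    (hz : ∀ᶠ l in 𝓝[≠] (0 : 𝕜), z ∈ (T - l • 1).range) : z ∈ T.range := by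
  have hclosed : IsClosed (T.range : Set E) := isClosed_range_of_mul_norm_le one_pos (by simpa)
  rw [← SetLike.mem_coe, ← hclosed.closure_eq, Metric.mem_closure_iff]
  intro δ hδ
  set r := min (1 / 2) (δ / (2 * ‖z‖ + 1))
  have hr : 0 < r := by positivity
  obtain ⟨l, ⟨u, hu⟩, hl⟩ :=
    (hz.and (eventually_nhdsWithin_of_eventually_nhds (Metric.ball_mem_nhds 0 hr))).exists
  rw [dist_zero_right, lt_min_iff] at hl
  have hu' : (T - l • 1) u = z := hu
  have hu_bound : ‖u‖ ≤ 2 * ‖z‖ := by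
    nlinarith [hu' ▸ mul_norm_le_norm_sub_smul_apply hT l u, norm_nonneg u]
  have hTu : T u = z + l • u := by
    rw [← hu']; simp
  refine ⟨T u, ⟨u, rfl⟩, ?_⟩
  calc dist z (T u) = ‖l‖ * ‖u‖ := by rw [hTu, dist_self_add_right, norm_smul]
    _ ≤ ‖l‖ * (2 * ‖z‖ + 1) := by gcongr; linarith
    _ < δ := (lt_div_iff₀ (by positivity)).mp hl.2

theorem exists_apply_eq_of_forall_mem_range_sub_smul (hT : ∀ x, ‖x‖ ≤ ‖T x‖) {ε : ℝ}
    (hε : 0 < ε) {y : E} (hy : ∀ l : 𝕜, ‖l‖ < ε → y ∈ (T - l • 1).range) :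
    ∃ z, (∀ l : 𝕜, ‖l‖ < ε → z ∈ (T - l • 1).range) ∧ T z = y := by
  obtain ⟨z, hz⟩ : y ∈ T.range := by simpa using hy 0 (by simpa using hε)
  have hz_mem (l : 𝕜) (hl0 : l ≠ 0) (hl : ‖l‖ < ε) : z ∈ (T - l • 1).range := by
    obtain ⟨w, hw⟩ := hy l hl
    exact Module.End.mem_range_sub_smul_of_apply_eq (T : E →ₗ[𝕜] E) hl0 hz hw
  refine ⟨z, fun l hl => ?_, hz⟩
  rcases eq_or_ne l 0 with rfl | hl0
  · have hnear : ∀ᶠ l in 𝓝[≠] (0 : 𝕜), z ∈ (T - l • 1).range :=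
      (eventually_mem_nhdsWithin.and (eventually_nhdsWithin_of_eventually_nhds
        (Metric.ball_mem_nhds 0 hε))).mono fun l ⟨hl0, hl⟩ => hz_mem l hl0 (by simpa using hl)
    simpa using mem_range_of_eventually_mem_range_sub_smul hT hnear
  · exact hz_mem l hl0 hl

theorem mem_range_pow_of_forall_mem_range_sub_smul (hT : ∀ x, ‖x‖ ≤ ‖T x‖) {ε : ℝ}
    (hε : 0 < ε) (n : ℕ) {y : E} (hy : ∀ l : 𝕜, ‖l‖ < ε → y ∈ (T - l • 1).range) :
    y ∈ (T ^ n).range := by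
  induction n generalizing y with
  | zero => exact ⟨y, rfl⟩
  | succ n ih =>
    obtain ⟨z, hz, rfl⟩ := exists_apply_eq_of_forall_mem_range_sub_smul hT hε hy
    obtain ⟨w, rfl⟩ := ih hz
    exact ⟨w, by simp [pow_succ']⟩

theorem iInf_range_pow_eq_iInf_range_sub_smul (hT : ∀ x, ‖x‖ ≤ ‖T x‖) {ε : ℝ} (hε0 : 0 < ε)
    (hε1 : ε < 1) :
    ⨅ (n : ℕ) (_ : 1 ≤ n), (T ^ n).range = ⨅ (l : 𝕜) (_ : ‖l‖ < ε), (T - l • 1).range := by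
  ext y
  simp only [Submodule.mem_iInf]
  refine ⟨fun hy l hl => mem_range_sub_smul_of_forall_mem_range_pow hT (fun n => ?_) (hl.trans hε1),
    fun hy n _ => mem_range_pow_of_forall_mem_range_sub_smul hT hε0 n hy⟩
  rcases n.eq_zero_or_pos with rfl | hn
  · exact ⟨y, rfl⟩
  · exact hy n hn

end NontriviallyNormedField

section InnerProductSpace

variable {𝕜 E F : Type*} [RCLike 𝕜] [NormedAddCommGroup E] [InnerProductSpace 𝕜 E] [CompleteSpace E]
  [NormedAddCommGroup F] [InnerProductSpace 𝕜 F] [CompleteSpace F]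

theorem orthogonal_ker_adjoint_of_isClosed_range {A : E →L[𝕜] F} (hA : IsClosed (A.range : Set F)) :
    (adjoint A).kerᗮ = A.range := by
  rw [orthogonal_ker, adjoint_adjoint, hA.submodule_topologicalClosure_eq]

variable {T : E →L[𝕜] E}

theorem orthogonal_ker_adjoint_pow (hT : ∀ x, ‖x‖ ≤ ‖T x‖) (n : ℕ) :
    (adjoint T ^ n).kerᗮ = (T ^ n).range := by
  rw [← star_eq_adjoint, ← star_pow, star_eq_adjoint]
  exact orthogonal_ker_adjoint_of_isClosed_range <|
    isClosed_range_of_mul_norm_le one_pos (by simpa using norm_le_norm_pow_apply hT n)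

theorem orthogonal_ker_adjoint_sub_smul (hT : ∀ x, ‖x‖ ≤ ‖T x‖) {l : 𝕜} (hl : ‖l‖ < 1) :
    (adjoint T - starRingEnd 𝕜 l • 1).kerᗮ = (T - l • 1).range := by
  have hadj : adjoint T - starRingEnd 𝕜 l • 1 = adjoint (T - l • 1) := by
    rw [← star_eq_adjoint, ← star_eq_adjoint, star_sub, star_smul, star_one]
    rfl
  rw [hadj]
  exact orthogonal_ker_adjoint_of_isClosed_range <|
    isClosed_range_of_mul_norm_le (by linarith) (mul_norm_le_norm_sub_smul_apply hT l)

end InnerProductSpace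

end ContinuousLinearMap

theorem Submodule.orthogonal_iSup {𝕜 E : Type*} [RCLike 𝕜] [NormedAddCommGroup E]
    [InnerProductSpace 𝕜 E] {ι : Sort*} (K : ι → Submodule 𝕜 E) : (⨆ i, K i)ᗮ = ⨅ i, (K i)ᗮ :=
  (orthogonal_gc 𝕜 E).l_iSup

theorem stmt0 {H : Type*} [NormedAddCommGroup H] [InnerProductSpace ℂ H] [CompleteSpace H]
    (T : H →L[ℂ] H) (hT : ∀ x : H, ‖x‖ ≤ ‖T x‖) (ε : ℝ) (hε0 : 0 < ε) (hε1 : ε < 1) :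
    (⨆ n : ℕ, ⨆ _ : 1 ≤ n, LinearMap.ker (((adjoint T) ^ n : H →L[ℂ] H) : H →ₗ[ℂ] H)).topologicalClosure =
      (⨆ l : ℂ, ⨆ _ : ‖l‖ < ε,
        LinearMap.ker ((adjoint T - (starRingEnd ℂ l) • (1 : H →L[ℂ] H) : H →ₗ[ℂ] H))).topologicalClosure := by
  rw [← Submodule.orthogonal_orthogonal_eq_closure, ← Submodule.orthogonal_orthogonal_eq_closure]
  congr 1
  -- the statement coerces `adjoint T` and `1` to linear maps separately; regroup under one coercion
  simp only [Submodule.orthogonal_iSup, ← toLinearMap_smul, ← toLinearMap_sub]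
  rw [iInf_congr fun n => iInf_congr fun _ => orthogonal_ker_adjoint_pow hT n,
    iInf_congr fun l => iInf_congr fun hl => orthogonal_ker_adjoint_sub_smul hT (hl.trans hε1)]
  exact iInf_range_pow_eq_iInf_range_sub_smul hT hε0 hε1
end

section
/- Let R be a bounded operator on a Hilbert space H with R*R ≥ I (i.e., ‖Rx‖ ≥ ‖x‖ for all x). If M ⊆ H is a closed invariant subspace of R such that the restriction R|_M is unitary (as an operator on M), then M is a reducing subspace for R. -/
/-!
The form `q x = ‖R x‖² - ‖x‖²` is positive semidefinite, so any vector `u` with `q u = 0` lies in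
the kernel of its polarisation: `b = ⟪R u, R x⟫ - ⟪u, x⟫` vanishes for every `x`, because the
real quadratic `t ↦ q (u + t • conj b • x)` is nonnegative, vanishes at `0`, and has slope `2‖b‖²`
there. If `x ⊥ M` and `m = R u` with `u ∈ M`, then
`⟪m, R x⟫ = ⟪u, x⟫ = 0`.
-/

open ComplexConjugate RCLike

section

variable {𝕜 E F : Type*} [RCLike 𝕜] [NormedAddCommGroup E] [InnerProductSpace 𝕜 E]
  [NormedAddCommGroup F] [InnerProductSpace 𝕜 F]

local notation "⟪" x ", " y "⟫" => inner 𝕜 x y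

lemma eq_zero_of_forall_nonneg_mul_sq_add_mul {a b : ℝ} (h : ∀ t : ℝ, 0 ≤ a * (t * t) + b * t) :
    b = 0 := by
  have hdisc := discrim_le_zero (K := ℝ) (a := a) (b := b) (c := 0) (by simpa using h)
  rw [discrim] at hdisc
  nlinarith [sq_nonneg b]

lemma LinearMap.inner_map_map_of_norm_map_eq {R : E →ₗ[𝕜] F} (hexp : ∀ x, ‖x‖ ≤ ‖R x‖)
    {u : E} (hu : ‖R u‖ = ‖u‖) (x : E) : ⟪R u, R x⟫ = ⟪u, x⟫ := by
  set b := ⟪R u, R x⟫ - ⟪u, x⟫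
  have hq : ∀ c : 𝕜, 0 ≤ 2 * re (c * b) + ‖c‖ ^ 2 * (‖R x‖ ^ 2 - ‖x‖ ^ 2) := by
    intro c
    have h := pow_le_pow_left₀ (norm_nonneg _) (hexp (u + c • x)) 2
    rw [map_add, map_smul, norm_add_sq (𝕜 := 𝕜), norm_add_sq (𝕜 := 𝕜), inner_smul_right,
      inner_smul_right, norm_smul, norm_smul, hu] at h
    simp only [b, mul_sub, map_sub]
    nlinarith
  suffices 2 * ‖b‖ ^ 2 = 0 by simpa [b, sub_eq_zero] using this
  refine eq_zero_of_forall_nonneg_mul_sq_add_mul (a := ‖b‖ ^ 2 * (‖R x‖ ^ 2 - ‖x‖ ^ 2))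
    (b := 2 * ‖b‖ ^ 2) fun t => ?_
  have hc := hq ((t : 𝕜) * conj b)
  rw [mul_assoc, RCLike.conj_mul, norm_mul, norm_conj, norm_ofReal, ← ofReal_pow, ← ofReal_mul,
    ofReal_re, mul_pow, sq_abs] at hc
  linarith

end

theorem stmt2_general {H : Type*} [NormedAddCommGroup H] [InnerProductSpace ℂ H]
    (R : H →L[ℂ] H) (hexp : ∀ x : H, ‖x‖ ≤ ‖R x‖)
    (M : Submodule ℂ H) (hiso : ∀ x ∈ M, ‖R x‖ = ‖x‖)
    (hsurj : ∀ y ∈ M, ∃ x ∈ M, R x = y) :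
    ∀ x ∈ Mᗮ, R x ∈ Mᗮ := by
  intro x hx
  rw [Submodule.mem_orthogonal]
  rintro _ hm
  obtain ⟨u, hu, rfl⟩ := hsurj _ hm
  exact (R.toLinearMap.inner_map_map_of_norm_map_eq hexp (hiso u hu) x).trans
    (Submodule.inner_right_of_mem_orthogonal hu hx)

theorem stmt2 {H : Type*} [NormedAddCommGroup H] [InnerProductSpace ℂ H] [CompleteSpace H]
    (R : H →L[ℂ] H) (hexp : ∀ x : H, ‖x‖ ≤ ‖R x‖)
    (M : Submodule ℂ H) (hMc : IsClosed (M : Set H))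
    (hinv : ∀ x ∈ M, R x ∈ M) (hiso : ∀ x ∈ M, ‖R x‖ = ‖x‖)
    (hsurj : ∀ y ∈ M, ∃ x ∈ M, R x = y) :
    ∀ x ∈ Mᗮ, R x ∈ Mᗮ :=
  stmt2_general R hexp M hiso hsurj
end

section
/- Let T ∈ B(H) satisfy Δ = T*T − I ≥ 0, and let L = (T*T)⁻¹T* be the left inverse of T with ker L = ker T*. Set D* = (I − LL*)^{1/2}. Then the closure of the range of Δ equals the closure of the range of D*. -/
/-!
The operators `Δ = T*T - 1` and `D*` are self-adjoint, so the closures of their ranges are the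
orthogonal complements of their kernels, and it suffices to compare kernels. Since
`L L* = (T*T)⁻¹ T* T (T*T)⁻¹ = (T*T)⁻¹`, we get `D*² = 1 - (T*T)⁻¹`, whose kernel is that of
`T*T - 1`; and `ker D*² = ker D*` because `D*` is self-adjoint.
-/

open ContinuousLinearMap

namespace ContinuousLinearMap

variable {𝕜 E : Type*} [RCLike 𝕜] [NormedAddCommGroup E] [InnerProductSpace 𝕜 E] [CompleteSpace E]

theorem closure_range_eq_orthogonal_ker {A : E →L[𝕜] E} (hA : IsSelfAdjoint A) :
    closure (Set.range A) = ((A : E →ₗ[𝕜] E).kerᗮ : Set E) := by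
  rw [orthogonal_ker, hA.adjoint_eq, Submodule.topologicalClosure_coe]
  rfl

theorem closure_range_eq_of_ker_eq {A B : E →L[𝕜] E} (hA : IsSelfAdjoint A)
    (hB : IsSelfAdjoint B) (hAB : (A : E →ₗ[𝕜] E).ker = (B : E →ₗ[𝕜] E).ker) :
    closure (Set.range A) = closure (Set.range B) := by
  rw [closure_range_eq_orthogonal_ker hA, closure_range_eq_orthogonal_ker hB, hAB]

theorem ker_comp_self_of_isSelfAdjoint {A : E →L[𝕜] E} (hA : IsSelfAdjoint A) :
    (A ∘L A : E →ₗ[𝕜] E).ker = (A : E →ₗ[𝕜] E).ker := by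
  simpa only [hA.adjoint_eq] using ker_adjoint_comp_self A

end ContinuousLinearMap

theorem LinearMap.ker_one_sub_eq_ker_sub_one {R M : Type*} [Ring R] [AddCommGroup M] [Module R M]
    {P S : M →ₗ[R] M} (hSP : S ∘ₗ P = 1) (hPS : P ∘ₗ S = 1) : (1 - S).ker = (P - 1).ker := by
  have hP : P - 1 = P ∘ₗ (1 - S) := by rw [comp_sub, hPS]; rfl
  have hS : 1 - S = S ∘ₗ (P - 1) := by rw [comp_sub, hSP]; rfl
  exact le_antisymm (hP ▸ ker_le_ker_comp _ _) (hS ▸ ker_le_ker_comp _ _)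

theorem stmt4_general {H : Type*} [NormedAddCommGroup H] [InnerProductSpace ℂ H] [CompleteSpace H]
    (T S Dstar : H →L[ℂ] H)
    (hS1 : S ∘L (adjoint T ∘L T) = 1) (hS2 : (adjoint T ∘L T) ∘L S = 1)
    (hDpos : Dstar.IsPositive)
    (hDsq : Dstar ∘L Dstar = 1 - (S ∘L adjoint T) ∘L adjoint (S ∘L adjoint T)) :
    closure (Set.range ⇑(adjoint T ∘L T - 1)) = closure (Set.range ⇑Dstar) := by
  have hTT : IsSelfAdjoint (adjoint T ∘L T) := IsSelfAdjoint.star_mul_self T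
  have hLL : (S ∘L adjoint T) ∘L adjoint (S ∘L adjoint T) = adjoint S := by
    rw [adjoint_comp, adjoint_adjoint, comp_assoc, ← comp_assoc (adjoint T), ← comp_assoc, hS1]
    rfl
  have hSadj_comp : adjoint S ∘L (adjoint T ∘L T) = 1 := by
    rw [← hTT.adjoint_eq, ← adjoint_comp, hS2, adjoint_one]
  have hcomp_Sadj : (adjoint T ∘L T) ∘L adjoint S = 1 := by
    rw [← hTT.adjoint_eq, ← adjoint_comp, hS1, adjoint_one]
  have hker : ((1 - adjoint S : H →L[ℂ] H) : H →ₗ[ℂ] H).ker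
      = ((adjoint T ∘L T - 1 : H →L[ℂ] H) : H →ₗ[ℂ] H).ker :=
    LinearMap.ker_one_sub_eq_ker_sub_one (by rw [← toLinearMap_comp, hSadj_comp, toLinearMap_one])
      (by rw [← toLinearMap_comp, hcomp_Sadj, toLinearMap_one])
  refine closure_range_eq_of_ker_eq (hTT.sub (IsSelfAdjoint.one _)) hDpos.isSelfAdjoint ?_
  rw [← hker, ← hLL, ← hDsq, ker_comp_self_of_isSelfAdjoint hDpos.isSelfAdjoint]

theorem stmt4 {H : Type*} [NormedAddCommGroup H] [InnerProductSpace ℂ H] [CompleteSpace H]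
    (T S Dstar : H →L[ℂ] H) (hexp : ∀ x : H, ‖x‖ ≤ ‖T x‖)
    (hS1 : S ∘L (adjoint T ∘L T) = 1) (hS2 : (adjoint T ∘L T) ∘L S = 1)
    (hDpos : Dstar.IsPositive)
    (hDsq : Dstar ∘L Dstar = 1 - (S ∘L adjoint T) ∘L adjoint (S ∘L adjoint T)) :
    closure (Set.range ⇑(adjoint T ∘L T - 1)) = closure (Set.range ⇑Dstar) :=
  stmt4_general T S Dstar hS1 hS2 hDpos hDsq
end

section
/- Let T ∈ B(H) satisfy Δ = T*T − I ≥ 0, and let L = (T*T)⁻¹T* be the left inverse of T with ker L = ker T*. Then the smallest closed T*-invariant subspace containing ran Δ equals the smallest closed L-invariant subspace containing ran Δ. -/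
open ContinuousLinearMap

/-- The smallest closed `A`-invariant subspace containing the range of `Δ`. -/
noncomputable def invSpan {H : Type*} [NormedAddCommGroup H] [InnerProductSpace ℂ H]
    (A Δ : H →L[ℂ] H) : Submodule ℂ H :=
  (Submodule.span ℂ (⋃ n : ℕ, ⇑(A ^ n) '' Set.range ⇑Δ)).topologicalClosure

/-!
Both spans are the smallest subspace containing `ran Δ` and invariant under the respective
operator. Writing `Δ = T*T - 1` and `L = ST*`, the identity `ΔS = 1 - S` gives
`T* = L + ΔL` and `L = T* - Δ(ST*)`, so each operator differs from the other by an operator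
with range in `ran Δ`; hence each span is invariant under both operators.
-/

section OrbitSpan

variable {R M : Type*} [Semiring R] [AddCommMonoid M] [Module R M] [TopologicalSpace M]

theorem apply_mem_span_orbit (A Δ : M →L[R] M) (y : M) :
    Δ y ∈ Submodule.span R (⋃ n : ℕ, ⇑(A ^ n) '' Set.range ⇑Δ) :=
  Submodule.subset_span (Set.mem_iUnion.2 ⟨0, Δ y, ⟨y, rfl⟩, rfl⟩)

theorem map_mem_span_orbit (A Δ : M →L[R] M) {x : M}
    (hx : x ∈ Submodule.span R (⋃ n : ℕ, ⇑(A ^ n) '' Set.range ⇑Δ)) :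
    A x ∈ Submodule.span R (⋃ n : ℕ, ⇑(A ^ n) '' Set.range ⇑Δ) := by
  have hA : ⇑A '' (⋃ n : ℕ, ⇑(A ^ n) '' Set.range ⇑Δ) ⊆ ⋃ n : ℕ, ⇑(A ^ n) '' Set.range ⇑Δ := by
    rintro _ ⟨_, ⟨_, ⟨n, rfl⟩, z, hz, rfl⟩, rfl⟩
    exact Set.mem_iUnion.2 ⟨n + 1, z, hz, by rw [pow_succ']; rfl⟩
  exact Submodule.span_mono hA (Submodule.apply_mem_span_image_of_mem_span A.toLinearMap hx)

theorem span_orbit_le {A Δ : M →L[R] M} {N : Submodule R M} (hΔ : ∀ y, Δ y ∈ N)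
    (hA : ∀ x ∈ N, A x ∈ N) : Submodule.span R (⋃ n : ℕ, ⇑(A ^ n) '' Set.range ⇑Δ) ≤ N := by
  rw [Submodule.span_le]
  rintro _ ⟨_, ⟨n, rfl⟩, _, ⟨y, rfl⟩, rfl⟩
  induction n with
  | zero => exact hΔ y
  | succ n ih => rw [pow_succ']; exact hA _ ih

theorem span_orbit_le_of_eq_add_comp [ContinuousAdd M] {A B Δ : M →L[R] M} (C : M →L[R] M)
    (h : A = B + Δ ∘L C) :
    Submodule.span R (⋃ n : ℕ, ⇑(A ^ n) '' Set.range ⇑Δ) ≤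
      Submodule.span R (⋃ n : ℕ, ⇑(B ^ n) '' Set.range ⇑Δ) :=
  span_orbit_le (apply_mem_span_orbit B Δ) fun x hx => by
    rw [h, add_apply, comp_apply]
    exact add_mem (map_mem_span_orbit B Δ hx) (apply_mem_span_orbit B Δ _)

end OrbitSpan

theorem invSpan_le_of_eq_add_comp {H : Type*} [NormedAddCommGroup H] [InnerProductSpace ℂ H]
    {A B Δ : H →L[ℂ] H} (C : H →L[ℂ] H) (h : A = B + Δ ∘L C) :
    invSpan A Δ ≤ invSpan B Δ :=
  Submodule.topologicalClosure_mono (span_orbit_le_of_eq_add_comp C h)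

theorem stmt5_general {H : Type*} [NormedAddCommGroup H] [InnerProductSpace ℂ H] [CompleteSpace H]
    (T S : H →L[ℂ] H) (hS2 : (adjoint T ∘L T) ∘L S = 1) :
    invSpan (adjoint T) (adjoint T ∘L T - 1) =
      invSpan (S ∘L adjoint T) (adjoint T ∘L T - 1) := by
  have hΔS : (adjoint T ∘L T - 1) ∘L S = 1 - S := by
    rw [sub_comp, hS2, one_def, id_comp]
  apply le_antisymm
  · refine invSpan_le_of_eq_add_comp (S ∘L adjoint T) ?_
    rw [← comp_assoc, hΔS, sub_comp, one_def, id_comp, add_sub_cancel]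
  · refine invSpan_le_of_eq_add_comp (-(S ∘L adjoint T)) ?_
    rw [comp_neg, ← comp_assoc, hΔS, sub_comp, one_def, id_comp, neg_sub, add_sub_cancel]

theorem stmt5 {H : Type*} [NormedAddCommGroup H] [InnerProductSpace ℂ H] [CompleteSpace H]
    (T S : H →L[ℂ] H) (hexp : ∀ x : H, ‖x‖ ≤ ‖T x‖)
    (hS1 : S ∘L (adjoint T ∘L T) = 1) (hS2 : (adjoint T ∘L T) ∘L S = 1) :
    invSpan (adjoint T) (adjoint T ∘L T - 1) =
      invSpan (S ∘L adjoint T) (adjoint T ∘L T - 1) :=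
  stmt5_general T S hS2
end

section
/- Let n ∈ ℕ, w ∈ ℂ with |w| = 1, and T, P ∈ B(H) with P ≥ 0. Then Σ_{k=0}^{n−1} C(n−1,k) (−1)^{n−1−k} T*^k P T^k = Σ_{k=0}^{n−1} C(n−1,k) (T* − w̄)^k P T^k (w̄T − I)^{n−1−k}. -/
open ContinuousLinearMap Finset

lemma cast_mul_helper {E : Type*} [Ring E] [Algebra ℂ E] (x : E) (N : ℕ) :
    x * (N : E) = (N : ℂ) • x := by
  rw [(Nat.cast_commute N x).symm.eq, ← nsmul_eq_mul, ← Nat.cast_smul_eq_nsmul ℂ]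

lemma key_alg {E : Type*} [Ring E] [Algebra ℂ E] (A T : E) (hAT : Commute A T) (c : ℂ) (m : ℕ) :
    ∑ k ∈ range (m + 1), (((-1 : ℂ) ^ (m - k)) * (m.choose k : ℂ)) • (A ^ k * T ^ k) =
      ∑ k ∈ range (m + 1), ((m.choose k : ℂ)) •
        ((A - c • 1) ^ k * T ^ k * (c • T - 1) ^ (m - k)) := by
  have hAc : Commute (A - c • 1) T := hAT.sub_left ((Commute.one_left T).smul_left c)
  have ha : Commute ((A - c • 1) * T) (c • T - 1) :=
    (((hAc.mul_left (Commute.refl T)).smul_right c)).sub_right (Commute.one_right _)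
  have hsum : (A - c • 1) * T + (c • T - 1) = A * T - 1 := by
    rw [sub_mul, smul_mul_assoc, one_mul]; abel
  have lhs_eq : ∑ k ∈ range (m + 1), (((-1 : ℂ) ^ (m - k)) * (m.choose k : ℂ)) • (A ^ k * T ^ k)
      = (A * T - 1) ^ m := by
    rw [sub_eq_add_neg, (Commute.neg_one_right (A * T)).add_pow]
    refine Finset.sum_congr rfl fun k hk => ?_
    rw [hAT.mul_pow]
    rw [cast_mul_helper (A ^ k * T ^ k * (-1 : E) ^ (m - k)) (m.choose k)]
    rw [show ((-1 : E)) ^ (m - k) = ((-1 : ℂ) ^ (m - k)) • (1 : E) by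
        rw [show (-1 : E) = (-1 : ℂ) • 1 by simp, smul_pow, one_pow],
      mul_smul_comm, mul_one, smul_smul, mul_comm ((m.choose k : ℂ))]
  have rhs_eq : ∑ k ∈ range (m + 1), ((m.choose k : ℂ)) •
        ((A - c • 1) ^ k * T ^ k * (c • T - 1) ^ (m - k))
      = (A * T - 1) ^ m := by
    rw [← hsum, ha.add_pow]
    refine Finset.sum_congr rfl fun k hk => ?_
    rw [hAc.mul_pow,
      cast_mul_helper (((A - c • 1) ^ k * T ^ k) * (c • T - 1) ^ (m - k)) (m.choose k)]
  rw [lhs_eq, rhs_eq]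

theorem stmt7 {H : Type*} [NormedAddCommGroup H] [InnerProductSpace ℂ H] [CompleteSpace H]
    (n : ℕ) (w : ℂ) (hw : ‖w‖ = 1) (T P : H →L[ℂ] H) (hP : P.IsPositive) :
    ∑ k ∈ Finset.range n,
        (((-1 : ℂ) ^ (n - 1 - k)) * ((n - 1).choose k : ℂ)) •
          (((adjoint T) ^ k) ∘L P ∘L (T ^ k)) =
      ∑ k ∈ Finset.range n,
        (((n - 1).choose k : ℂ)) •
          (((adjoint T - (starRingEnd ℂ w) • (1 : H →L[ℂ] H)) ^ k) ∘L P ∘L (T ^ k) ∘L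
            ((starRingEnd ℂ w) • T - 1) ^ (n - 1 - k)) := by
  cases n with
  | zero => simp
  | succ m =>
    set c : ℂ := starRingEnd ℂ w with hc
    set A : H →L[ℂ] H := adjoint T with hA
    have key := key_alg (E := Module.End ℂ (H →L[ℂ] H))
      (LinearMap.mulLeft ℂ A) (LinearMap.mulRight ℂ T)
      (LinearMap.commute_mulLeft_right A T) c m
    have hL : LinearMap.mulLeft ℂ A - c • (1 : Module.End ℂ (H →L[ℂ] H))
        = LinearMap.mulLeft ℂ (A - c • 1) := by
      ext X x
      simp [sub_mul, smul_mul_assoc]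
    have hR : c • LinearMap.mulRight ℂ T - (1 : Module.End ℂ (H →L[ℂ] H))
        = LinearMap.mulRight ℂ (c • T - 1) := by
      ext X x
      simp [mul_sub, mul_smul_comm]
    rw [hL, hR] at key
    have key2 := congrArg (fun f : Module.End ℂ (H →L[ℂ] H) => f P) key
    simp only [LinearMap.sum_apply, LinearMap.smul_apply, Module.End.mul_apply,
      LinearMap.pow_mulLeft, LinearMap.pow_mulRight, LinearMap.mulLeft_apply,
      LinearMap.mulRight_apply] at key2
    simp only [Nat.add_sub_cancel, ← ContinuousLinearMap.mul_def]
    refine key2.trans (Finset.sum_congr rfl fun k hk => ?_)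
    congr 1
    have hcomm : Commute (T ^ k) ((c • T - 1) ^ (m - k)) :=
      (((Commute.refl T).smul_right c).sub_right (Commute.one_right T)).pow_pow k (m - k)
    rw [mul_assoc P, ← hcomm.eq, ← mul_assoc, mul_assoc]
end

section
/- Let T ∈ B(H) with Δ = T*T − I ≥ 0, N = [ran Δ]_{T*} of finite dimension n. For any tuple c = (c₀,...,c_{n−1}) of strictly positive reals, the sesquilinear form ⟨x,y⟩_c = Σ_{j=0}^{n−1} c_j ⟨Δ T^j x, T^j y⟩ defines an inner product (in particular a positive definite form) on N. -/
/-!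
If the sum vanishes, positivity of `Δ` and of the weights forces `Δ T^j x = 0` for `j < n`,
i.e. `x` is orthogonal to `(T*)^j (ran Δ)` for `j < n`. These spaces span the Krylov space `K_n`.
The chain `K_0 ≤ K_1 ≤ ⋯` lies in the `n`-dimensional space `N`, so it stops growing at some
`k ≤ n`; a Krylov space that stops growing is `T*`-invariant, hence `N ≤ K_k ≤ K_n` and `x ⟂ x`.
-/

open ContinuousLinearMap

theorem ContinuousLinearMap.IsPositive.apply_eq_zero_of_re_inner_eq_zero
    {H : Type*} [NormedAddCommGroup H] [InnerProductSpace ℂ H] [CompleteSpace H]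
    {T : H →L[ℂ] H} (hT : T.IsPositive) {x : H} (hx : (inner ℂ (T x) x).re = 0) : T x = 0 := by
  -- writing `T = b† b`, `⟪T x, x⟫ = ‖b x‖²`
  obtain ⟨b, rfl⟩ := CStarAlgebra.nonneg_iff_eq_star_mul_self.mp ((nonneg_iff_isPositive T).mpr hT)
  have hbx : b x = 0 := by
    rw [mul_apply_eq_comp, star_eq_adjoint, adjoint_inner_left] at hx
    exact (re_inner_self_nonpos (𝕜 := ℂ)).mp hx.le
  simp [hbx]

theorem Submodule.exists_le_finrank_succ_le {K V : Type*} [DivisionRing K] [AddCommGroup V]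
    [Module K V] {W : ℕ → Submodule K V} (hW : Monotone W) {N : Submodule K V}
    [FiniteDimensional K N] (hle : ∀ k, W k ≤ N) :
    ∃ k ≤ Module.finrank K N, W (k + 1) ≤ W k := by
  by_contra! hlt
  have hrank : ∀ k ≤ Module.finrank K N + 1, k ≤ Module.finrank K (W k) := by
    intro k hk
    induction k with
    | zero => exact Nat.zero_le _
    | succ k ih =>
      have := Submodule.finiteDimensional_of_le (hle (k + 1))
      have := Submodule.finrank_lt_finrank_of_lt
        (lt_of_le_not_ge (hW (Nat.le_add_right k 1)) (hlt k (by omega)))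
      omega
  have := hrank _ le_rfl
  have := Submodule.finrank_mono (hle (Module.finrank K N + 1))
  omega

section Krylov

variable {R M : Type*} [Semiring R] [AddCommMonoid M] [Module R M] (f : Module.End R M) (s : Set M)

def krylov (k : ℕ) : Submodule R M :=
  Submodule.span R (⋃ j < k, ⇑(f ^ j) '' s)

variable {f s}

theorem krylov_mono : Monotone (krylov f s) := fun _ _ hkl =>
  Submodule.span_mono <| Set.biUnion_subset_biUnion_left fun _ hj => lt_of_lt_of_le hj hkl

theorem pow_apply_mem_krylov {j k : ℕ} (hj : j < k) {x : M} (hx : x ∈ s) :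
    (f ^ j) x ∈ krylov f s k :=
  Submodule.subset_span <| Set.mem_biUnion hj ⟨x, hx, rfl⟩

theorem map_krylov_le (k : ℕ) : (krylov f s k).map f ≤ krylov f s (k + 1) := by
  rw [Submodule.map_le_iff_le_comap, krylov, Submodule.span_le]
  intro y hy
  obtain ⟨j, hj, x, hx, rfl⟩ := Set.mem_iUnion₂.mp hy
  rw [SetLike.mem_coe, Submodule.mem_comap, ← Module.End.mul_apply, ← pow_succ']
  exact pow_apply_mem_krylov (Nat.succ_lt_succ hj) hx

theorem span_iUnion_pow_image_le_krylov {k : ℕ} (h : krylov f s (k + 1) ≤ krylov f s k) :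
    Submodule.span R (⋃ j, ⇑(f ^ j) '' s) ≤ krylov f s k := by
  rw [Submodule.span_le]
  rintro _ ⟨_, ⟨j, rfl⟩, x, hx, rfl⟩
  induction j with
  | zero => exact h (pow_apply_mem_krylov k.succ_pos hx)
  | succ j ih =>
    rw [pow_succ', Module.End.mul_apply]
    exact h (map_krylov_le k ⟨_, ih, rfl⟩)

end Krylov

theorem krylov_adjoint_le_orthogonal {𝕜 E : Type*} [RCLike 𝕜] [NormedAddCommGroup E]
    [InnerProductSpace 𝕜 E] [CompleteSpace E] {T D : E →L[𝕜] E} (hD : IsSelfAdjoint D)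
    {x : E} {k : ℕ} (hx : ∀ j < k, D ((T ^ j) x) = 0) :
    krylov (adjoint T : Module.End 𝕜 E) (Set.range D) k ≤ (𝕜 ∙ x)ᗮ := by
  rw [krylov, Submodule.span_le]
  intro y hy
  obtain ⟨j, hj, _, ⟨z, rfl⟩, rfl⟩ := Set.mem_iUnion₂.mp hy
  -- `⟪x, (T†)^j (D z)⟫ = ⟪D (T^j x), z⟫`
  rw [SetLike.mem_coe, Submodule.mem_orthogonal_singleton_iff_inner_right, ← toLinearMap_pow,
    ← star_eq_adjoint, ← star_pow, coe_coe, star_eq_adjoint, adjoint_inner_right,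
    ← hD.adjoint_eq, adjoint_inner_right, hx j hj, inner_zero_left]

section invSpan

variable {H : Type*} [NormedAddCommGroup H] [InnerProductSpace ℂ H] {A Δ : H →L[ℂ] H}

theorem krylov_le_invSpan (k : ℕ) : krylov (A : Module.End ℂ H) (Set.range Δ) k ≤ invSpan A Δ := by
  refine le_trans (Submodule.span_mono ?_) (Submodule.le_topologicalClosure _)
  simp only [← toLinearMap_pow, coe_coe]
  exact Set.iUnion₂_subset_iUnion _ _

theorem invSpan_le_krylov {k : ℕ}
    (h : krylov (A : Module.End ℂ H) (Set.range Δ) (k + 1) ≤ krylov A (Set.range Δ) k)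
    [FiniteDimensional ℂ (krylov (A : Module.End ℂ H) (Set.range Δ) k)] :
    invSpan A Δ ≤ krylov A (Set.range Δ) k := by
  refine Submodule.topologicalClosure_minimal _ ?_ (Submodule.closed_of_finiteDimensional _)
  simpa only [← toLinearMap_pow, coe_coe] using span_iUnion_pow_image_le_krylov h

end invSpan

theorem stmt10 {H : Type*} [NormedAddCommGroup H] [InnerProductSpace ℂ H] [CompleteSpace H]
    (n : ℕ) (T : H →L[ℂ] H) (hpos : (adjoint T ∘L T - 1).IsPositive)
    (hfin : FiniteDimensional ℂ (invSpan (adjoint T) (adjoint T ∘L T - 1)))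
    (hdim : Module.finrank ℂ (invSpan (adjoint T) (adjoint T ∘L T - 1)) = n)
    (c : Fin n → ℝ) (hc : ∀ j, 0 < c j) :
    (∀ x : H, 0 ≤ ∑ j : Fin n, c j *
        ((inner ℂ ((adjoint T ∘L T - 1) ((T ^ (j : ℕ)) x)) ((T ^ (j : ℕ)) x) : ℂ)).re) ∧
      ∀ x ∈ invSpan (adjoint T) (adjoint T ∘L T - 1),
        (∑ j : Fin n, c j *
          ((inner ℂ ((adjoint T ∘L T - 1) ((T ^ (j : ℕ)) x)) ((T ^ (j : ℕ)) x) : ℂ)).re) = 0 →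
        x = 0 := by
  set Δ := adjoint T ∘L T - 1
  have hterm_nonneg (x : H) (j : Fin n) :
      0 ≤ c j * (inner ℂ (Δ ((T ^ (j : ℕ)) x)) ((T ^ (j : ℕ)) x)).re :=
    mul_nonneg (hc j).le (hpos.re_inner_nonneg_left _)
  refine ⟨fun x => Finset.sum_nonneg fun j _ => hterm_nonneg x j, fun x hx hsum => ?_⟩
  have hterm (j : Fin n) : c j * (inner ℂ (Δ ((T ^ (j : ℕ)) x)) ((T ^ (j : ℕ)) x)).re = 0 :=
    (Finset.sum_eq_zero_iff_of_nonneg fun j _ => hterm_nonneg x j).mp hsum j (Finset.mem_univ _)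
  have hker : ∀ j < n, Δ ((T ^ j) x) = 0 := fun j hj =>
    hpos.apply_eq_zero_of_re_inner_eq_zero <|
      (mul_eq_zero.mp (hterm ⟨j, hj⟩)).resolve_left (hc _).ne'
  obtain ⟨k, hk, hstab⟩ := Submodule.exists_le_finrank_succ_le krylov_mono
    (krylov_le_invSpan (A := adjoint T) (Δ := Δ))
  have : FiniteDimensional ℂ (krylov (adjoint T : Module.End ℂ H) (Set.range Δ) k) :=
    Submodule.finiteDimensional_of_le (krylov_le_invSpan k)
  have hxK := krylov_mono (hdim ▸ hk) (invSpan_le_krylov hstab hx)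
  exact inner_self_eq_zero.mp (Submodule.mem_orthogonal_singleton_iff_inner_right.mp
    (krylov_adjoint_le_orthogonal hpos.isSelfAdjoint hker hxK))
end

section
/- Let A be an n×n complex matrix with spectrum {w₁,...,w_k} and let Δ be a positive semidefinite n×n matrix. Then Δ N_{w_i}(A) ⊥ N_{w_j}(A) for all i ≠ j if and only if Δ = Σ_{j=1}^k Δ_j with each Δ_j positive semidefinite and ran Δ_j ⊆ N_{w̄_j}(A*). -/
/-!
Since the spectrum of `A` lies in `{w_j}`, Cayley–Hamilton gives `∏ⱼ (A - w_j)^e = 0` for some `e`,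
and Bézout for the pairwise coprime `(X - w_j)^e` produces polynomials `P_j` in `A` (the spectral
projections) with `∑ⱼ P_j = 1` and `(A - w_j)^e P_j = 0 = P_j (A - w_j)^e`. If `Δ` makes distinct
root subspaces orthogonal, the cross terms `P_iᴴ Δ P_j` vanish, so `Δ = ∑ⱼ P_jᴴ Δ P_j`, and the range
of `P_jᴴ` lies in `N_{w̄_j}(Aᴴ)` because `(Aᴴ - w̄_j)^e P_jᴴ = (P_j (A - w_j)^e)ᴴ = 0`.
Conversely, `N_{μ̄}(Aᴴ) ⊥ N_ν(A)` for `μ ≠ ν`: by Bézout again, `N_ν(A)` lies in the range of every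
power `(A - μ)^p`, which is orthogonal to `ker (Aᴴ - μ̄)^p`.
-/

open Matrix
open scoped ComplexOrder
/-- The generalized eigenspace (root subspace) of a matrix `M` at `μ`. -/
noncomputable def genEig {n : ℕ} (M : Matrix (Fin n) (Fin n) ℂ) (μ : ℂ) :
    Submodule ℂ (Fin n → ℂ) :=
  ⨆ l : ℕ, LinearMap.ker ((Matrix.toLin' M - μ • (1 : Module.End ℂ (Fin n → ℂ))) ^ l)

open Polynomial Function

theorem Polynomial.exists_sum_eq_one_of_aeval_prod_eq_zero {R S ι : Type*} [CommRing R] [Ring S]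
    [Algebra R S] [Fintype ι] [DecidableEq ι] {f : ι → R[X]} (hf : Pairwise (IsCoprime on f))
    {a : S} (ha : aeval a (∏ i, f i) = 0) :
    ∃ P : ι → S, ∑ i, P i = 1 ∧ ∀ i, aeval a (f i) * P i = 0 ∧ P i * aeval a (f i) = 0 := by
  cases isEmpty_or_nonempty ι
  · -- the empty product turns `ha` into `1 = 0` in `S`
    refine ⟨0, ?_, isEmptyElim⟩
    simpa [eq_comm] using ha
  obtain ⟨c, hc⟩ := exists_sum_eq_one_iff_pairwise_coprime'.mpr hf
  have hkill (i : ι) : f i * (c i * ∏ j ∈ {i}ᶜ, f j) = c i * ∏ j, f j := by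
    rw [Fintype.prod_eq_mul_prod_compl i]; ring
  refine ⟨fun i => aeval a (c i * ∏ j ∈ {i}ᶜ, f j), by rw [← map_sum, hc, map_one], fun i => ?_⟩
  rw [← map_mul, ← map_mul, mul_comm _ (f i), hkill, map_mul, ha, mul_zero]
  exact ⟨rfl, rfl⟩

namespace Matrix

variable {m K : Type*} [Fintype m] [Field K]

theorem star_dotProduct_mulVec {n R : Type*} [Fintype n] [CommSemiring R] [StarRing R]
    (M : Matrix m n R) (y : m → R) (x : n → R) : star y ⬝ᵥ (M *ᵥ x) = star (Mᴴ *ᵥ y) ⬝ᵥ x := by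
  rw [dotProduct_mulVec, star_mulVec, conjTranspose_conjTranspose]

variable [DecidableEq m]

theorem aeval_X_sub_C_pow (M : Matrix m m K) (μ : K) (l : ℕ) :
    aeval M ((X - C μ) ^ l) = (M - μ • 1) ^ l := by
  simp [Algebra.algebraMap_eq_smul_one]

theorem conjTranspose_sub_smul_one_pow [StarRing K] (M : Matrix m m K) (μ : K) (l : ℕ) :
    ((M - μ • 1) ^ l)ᴴ = (Mᴴ - star μ • 1) ^ l := by
  simp [conjTranspose_pow]

theorem exists_aeval_prod_X_sub_C_pow_eq_zero [IsAlgClosed K] {ι : Type*} [Fintype ι]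
    (A : Matrix m m K) (w : ι → K) (h : spectrum K A ⊆ Set.range w) :
    ∃ e : ℕ, aeval A (∏ i, (X - C (w i)) ^ e) = 0 := by
  set g : K[X] := ∏ i, (X - C (w i))
  have hdvd : A.charpoly ∣ g ^ Multiset.card A.charpoly.roots := by
    conv_lhs => rw [(IsAlgClosed.splits _).eq_prod_roots_of_monic A.charpoly_monic]
    rw [← Multiset.prod_replicate, ← Multiset.map_const']
    refine Multiset.prod_dvd_prod_of_dvd _ _ fun r hr => ?_
    obtain ⟨i, rfl⟩ := h (mem_spectrum_iff_isRoot_charpoly.mpr (isRoot_of_mem_roots hr))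
    exact Finset.dvd_prod_of_mem _ (Finset.mem_univ i)
  refine ⟨Multiset.card A.charpoly.roots, ?_⟩
  rw [Finset.prod_pow]
  exact aeval_eq_zero_of_dvd_aeval_eq_zero hdvd (aeval_self_charpoly A)

theorem exists_sum_eq_one_and_pow_sub_smul_one_mul_eq_zero [IsAlgClosed K] {ι : Type*}
    [Fintype ι] [DecidableEq ι] (A : Matrix m m K) {w : ι → K} (hw : Injective w)
    (h : spectrum K A ⊆ Set.range w) :
    ∃ (e : ℕ) (P : ι → Matrix m m K), ∑ i, P i = 1 ∧
      ∀ i, (A - w i • 1) ^ e * P i = 0 ∧ P i * (A - w i • 1) ^ e = 0 := by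
  obtain ⟨e, he⟩ := exists_aeval_prod_X_sub_C_pow_eq_zero A w h
  have hcop : Pairwise (IsCoprime on fun i => (X - C (w i)) ^ e) :=
    fun i j hij => (pairwise_coprime_X_sub_C hw hij).pow
  obtain ⟨P, hsum, hP⟩ := exists_sum_eq_one_of_aeval_prod_eq_zero hcop he
  exact ⟨e, P, hsum, fun i => aeval_X_sub_C_pow A (w i) e ▸ hP i⟩

theorem exists_pow_sub_smul_one_mulVec_eq (A : Matrix m m K) {μ ν : K} (hμν : μ ≠ ν) (p : ℕ)
    {q : ℕ} {x : m → K} (hx : (A - ν • 1) ^ q *ᵥ x = 0) :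
    ∃ z, (A - μ • 1) ^ p *ᵥ z = x := by
  obtain ⟨a, b, hab⟩ :=
    (isCoprime_X_sub_C_of_isUnit_sub (sub_ne_zero.2 hμν).isUnit).pow (m := p) (n := q)
  rw [mul_comm a] at hab
  refine ⟨aeval A a *ᵥ x, ?_⟩
  have := congrArg (fun r => aeval A r *ᵥ x) hab
  simpa only [map_add, map_mul, map_one, aeval_X_sub_C_pow, add_mulVec, ← mulVec_mulVec, hx,
    mulVec_zero, add_zero, one_mulVec] using this

theorem star_dotProduct_eq_zero_of_pow_mulVec_eq_zero [StarRing K] (A : Matrix m m K) {μ ν : K}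
    (hμν : μ ≠ ν) {p q : ℕ} {y x : m → K} (hy : (Aᴴ - star μ • 1) ^ p *ᵥ y = 0)
    (hx : (A - ν • 1) ^ q *ᵥ x = 0) : star y ⬝ᵥ x = 0 := by
  obtain ⟨z, rfl⟩ := exists_pow_sub_smul_one_mulVec_eq A hμν p hx
  rw [star_dotProduct_mulVec, conjTranspose_sub_smul_one_pow, hy, star_zero, zero_dotProduct]

end Matrix

theorem mem_genEig_iff {n : ℕ} {M : Matrix (Fin n) (Fin n) ℂ} {μ : ℂ} {x : Fin n → ℂ} :
    x ∈ genEig M μ ↔ ∃ l : ℕ, (M - μ • 1) ^ l *ᵥ x = 0 := by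
  have hmax : genEig M μ = Module.End.maxGenEigenspace (toLin' M) μ := by
    rw [← Module.End.iSup_genEigenspace_eq]
    simp_rw [Module.End.genEigenspace_nat]
    rfl
  rw [hmax, Module.End.mem_maxGenEigenspace]
  have hlin : toLin' M - μ • 1 = toLin' (M - μ • 1) := by
    rw [map_sub, _root_.map_smul, toLin'_one]
    rfl
  simp only [hlin, ← toLin'_pow, toLin'_apply]

theorem star_dotProduct_eq_zero_of_mem_genEig {n : ℕ} (A : Matrix (Fin n) (Fin n) ℂ) {μ ν : ℂ}
    (hμν : μ ≠ ν) {y x : Fin n → ℂ} (hy : y ∈ genEig Aᴴ (star μ)) (hx : x ∈ genEig A ν) :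
    star y ⬝ᵥ x = 0 := by
  obtain ⟨p, hp⟩ := mem_genEig_iff.1 hy
  obtain ⟨q, hq⟩ := mem_genEig_iff.1 hx
  exact star_dotProduct_eq_zero_of_pow_mulVec_eq_zero A hμν hp hq

theorem stmt12 {n k : ℕ} (A Δ : Matrix (Fin n) (Fin n) ℂ) (hΔ : Δ.PosSemidef)
    (w : Fin k → ℂ) (hw : Function.Injective w) (hspec : spectrum ℂ A = Set.range w) :
    (∀ i j : Fin k, i ≠ j → ∀ x ∈ genEig A (w i), ∀ y ∈ genEig A (w j),
        dotProduct (star y) (Δ.mulVec x) = 0) ↔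
      ∃ D : Fin k → Matrix (Fin n) (Fin n) ℂ, (∀ j, (D j).PosSemidef) ∧ (Δ = ∑ j, D j) ∧
        ∀ j, ∀ x : Fin n → ℂ, (D j).mulVec x ∈ genEig Aᴴ (starRingEnd ℂ (w j)) := by
  obtain ⟨e, P, hsum, hP⟩ :=
    exists_sum_eq_one_and_pow_sub_smul_one_mul_eq_zero A hw hspec.subset
  have hP_mem (j : Fin k) (x : Fin n → ℂ) : P j *ᵥ x ∈ genEig A (w j) :=
    mem_genEig_iff.2 ⟨e, by rw [mulVec_mulVec, (hP j).1, zero_mulVec]⟩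
  constructor
  · intro H
    have hcross (i j : Fin k) (hij : i ≠ j) : (P i)ᴴ * Δ * P j = 0 := by
      refine ext_iff_mulVec.2 fun x => ?_
      rw [zero_mulVec, ← dotProduct_star_self_eq_zero, ← mulVec_mulVec, ← mulVec_mulVec,
        star_dotProduct_mulVec, conjTranspose_conjTranspose]
      exact H j i hij.symm _ (hP_mem j x) _ (hP_mem i _)
    refine ⟨fun j => (P j)ᴴ * Δ * P j, fun j => hΔ.conjTranspose_mul_mul_same _, ?_,
      fun j x => mem_genEig_iff.2 ⟨e, ?_⟩⟩
    · calc Δ = (∑ i, P i)ᴴ * Δ * ∑ j, P j := by simp [hsum]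
        _ = ∑ j, ∑ i, (P i)ᴴ * Δ * P j := by
          simp only [conjTranspose_sum, Finset.sum_mul, Finset.mul_sum]
        _ = ∑ j, (P j)ᴴ * Δ * P j := Finset.sum_congr rfl fun j _ =>
          Fintype.sum_eq_single j fun i hi => hcross i j hi
    · rw [mulVec_mulVec, ← mul_assoc, ← mul_assoc, starRingEnd_apply,
        ← conjTranspose_sub_smul_one_pow, ← conjTranspose_mul, (hP j).2, conjTranspose_zero,
        zero_mul, zero_mul, zero_mulVec]
  · rintro ⟨D, hD, rfl, hran⟩ i j hij x hx y hy
    rw [sum_mulVec, dotProduct_sum]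
    refine Finset.sum_eq_zero fun l _ => ?_
    obtain rfl | hlj := eq_or_ne l j
    · rw [star_dotProduct_mulVec, (hD l).isHermitian.eq]
      exact star_dotProduct_eq_zero_of_mem_genEig A (hw.ne hij.symm) (hran l y) hx
    · exact star_dotProduct_eq_zero_of_mem_genEig Aᴴ (star_injective.ne (hw.ne hlj.symm))
        (by simpa using hy) (hran l x)
end

section
/- Let m ∈ ℕ, w ∈ 𝕋, and suppose f = Σ_{j=0}^{m−1} a_j (z−w)^j + (z−w)^m g with g ∈ H². Then zf ∈ D_w^m, and the local Dirichlet integral of order m satisfies D_w^m(zf) = D_w^m(f) + |a_{m−1}|², where D_w^m(f) = ‖g‖²_{H²}. -/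
/-!
Writing `z = w + (z - w)` turns `z * ∑_{j<m} a_j (z - w)^j` into a polynomial of degree `< m`
plus `(z - w)^m a_{m-1}`, so `z f` decomposes with remainder `a_{m-1} + z g`, whose coefficient
sequence is `(a_{m-1}, c_0, c_1, …)` and has squared `ℓ²` norm `|a_{m-1}|² + ‖g‖²`.

It remains to see that the decomposition is unique: if `(z - w)^m φ` is a polynomial of degree
`< m` and the coefficients `e` of `φ` tend to `0`, then `e = 0`. On coefficients, multiplication
by `z - w` is `e ↦ (e_{n-1} - w e_n)_n`; if the result vanishes from some index on, then
`|e_n| = |e_{n+1}|` there because `|w| = 1`, so that tail of `e` is zero. Peeling off the `m`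
factors one at a time gives `e = 0`.
-/

open Filter Finset Polynomial Topology

theorem mul_sum_mul_sub_pow {R : Type*} [CommRing R] (z w : R) (a : ℕ → R) {m : ℕ} (hm : 1 ≤ m) :
    z * ∑ j ∈ range m, a j * (z - w) ^ j =
      a 0 * w + ∑ j ∈ Ico 1 m, (a (j - 1) + a j * w) * (z - w) ^ j
        + (z - w) ^ m * a (m - 1) := by
  induction m, hm using Nat.le_induction with
  | base =>
    simp only [range_one, sum_singleton, Ico_self, sum_empty]
    ring
  | succ n hn ih =>
    rw [sum_range_succ, sum_Ico_succ_top hn, mul_add, ih, Nat.add_sub_cancel]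
    ring

theorem eq_of_eventually_hasSum_mul_pow {𝕜 : Type*} [NontriviallyNormedField 𝕜]
    {u v : ℕ → 𝕜} {F : 𝕜 → 𝕜}
    (hu : ∀ᶠ z in 𝓝 0, HasSum (fun n => u n * z ^ n) (F z))
    (hv : ∀ᶠ z in 𝓝 0, HasSum (fun n => v n * z ^ n) (F z)) : u = v := by
  have series {c : ℕ → 𝕜} (hc : ∀ᶠ z in 𝓝 0, HasSum (fun n => c n * z ^ n) (F z)) :
      HasFPowerSeriesAt F (FormalMultilinearSeries.ofScalars 𝕜 c) 0 :=
    hasFPowerSeriesAt_iff.2 <| hc.mono fun z hz => by simpa [mul_comm] using hz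
  exact FormalMultilinearSeries.ofScalars_series_injective (𝕜 := 𝕜) 𝕜
    ((series hu).eq_formalMultilinearSeries (series hv))

theorem Polynomial.hasSum_coeff_mul_pow {R : Type*} [CommSemiring R] [TopologicalSpace R]
    (P : R[X]) (z : R) : HasSum (fun n => P.coeff n * z ^ n) (P.eval z) := by
  rw [eval_eq_sum_range]
  refine hasSum_sum_of_ne_finset_zero fun n hn => ?_
  rw [coeff_eq_zero_of_natDegree_lt (by simpa using hn), zero_mul]

theorem Polynomial.degree_sum_C_mul_X_sub_C_pow_lt {R : Type*} [Ring R] [Nontrivial R]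
    (w : R) (b : ℕ → R) {s : Finset ℕ} {m : ℕ} (hs : ∀ j ∈ s, j < m) :
    (∑ j ∈ s, C (b j) * (X - C w) ^ j).degree < (m : WithBot ℕ) := by
  refine (degree_sum_le _ _).trans_lt ((Finset.sup_lt_iff (WithBot.bot_lt_coe m)).2 fun j hj => ?_)
  rw [← smul_eq_C_mul]
  refine (degree_smul_le _ _).trans_lt ((degree_pow_le _ _).trans_lt ?_)
  rw [degree_X_sub_C, nsmul_one]
  exact Nat.cast_lt.2 (hs j hj)

theorem tendsto_zero_of_summable_norm_sq {E : Type*} [SeminormedAddCommGroup E] {x : ℕ → E}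
    (hx : Summable fun n => ‖x n‖ ^ 2) : Tendsto x atTop (𝓝 0) := by
  rw [tendsto_zero_iff_norm_tendsto_zero]
  simpa [Function.comp_def, Real.sqrt_sq (norm_nonneg _)] using
    (Real.continuous_sqrt.tendsto 0).comp hx.tendsto_atTop_zero

def seqCons {α : Type*} (x : α) (c : ℕ → α) : ℕ → α
  | 0 => x
  | n + 1 => c n

theorem tsum_norm_sq_seqCons {E : Type*} [SeminormedAddCommGroup E] (x : E) {c : ℕ → E}
    (hc : Summable fun n => ‖c n‖ ^ 2) :
    ∑' n, ‖seqCons x c n‖ ^ 2 = ‖x‖ ^ 2 + ∑' n, ‖c n‖ ^ 2 :=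
  tsum_eq_zero_add' hc

section Shift

variable {𝕜 : Type*} [NormedField 𝕜]

theorem tendsto_seqCons {x : 𝕜} {c : ℕ → 𝕜} (hc : Tendsto c atTop (𝓝 0)) :
    Tendsto (seqCons x c) atTop (𝓝 0) :=
  (tendsto_add_atTop_iff_nat 1).1 hc

theorem hasSum_seqCons_mul_pow {x z φ : 𝕜} {c : ℕ → 𝕜}
    (hc : HasSum (fun n => c n * z ^ n) φ) :
    HasSum (fun n => seqCons x c n * z ^ n) (x + z * φ) := by
  rw [← hasSum_nat_add_iff' 1]
  simpa [seqCons, pow_succ, mul_left_comm, mul_comm] using hc.mul_left z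

def mulSubCoeffs (w : 𝕜) (e : ℕ → 𝕜) : ℕ → 𝕜 :=
  seqCons 0 e - w • e

theorem hasSum_mulSubCoeffs_mul_pow {w z φ : 𝕜} {e : ℕ → 𝕜}
    (he : HasSum (fun n => e n * z ^ n) φ) :
    HasSum (fun n => mulSubCoeffs w e n * z ^ n) ((z - w) * φ) := by
  have := (hasSum_seqCons_mul_pow (x := 0) he).sub (he.mul_left w)
  simpa [mulSubCoeffs, sub_mul, mul_assoc] using this

theorem hasSum_iterate_mulSubCoeffs_mul_pow {w z φ : 𝕜} {e : ℕ → 𝕜}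
    (he : HasSum (fun n => e n * z ^ n) φ) (k : ℕ) :
    HasSum (fun n => (mulSubCoeffs w)^[k] e n * z ^ n) ((z - w) ^ k * φ) := by
  induction k with
  | zero => simpa using he
  | succ k ih =>
    rw [Function.iterate_succ_apply', pow_succ', mul_assoc]
    exact hasSum_mulSubCoeffs_mul_pow ih

theorem tendsto_mulSubCoeffs {w : 𝕜} {e : ℕ → 𝕜} (he : Tendsto e atTop (𝓝 0)) :
    Tendsto (mulSubCoeffs w e) atTop (𝓝 0) := by
  have := (tendsto_seqCons (x := 0) he).sub (he.const_smul w)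
  rwa [smul_zero, sub_zero] at this

theorem eq_zero_of_mulSubCoeffs_eq_zero {w : 𝕜} (hw : ‖w‖ = 1) {e : ℕ → 𝕜}
    (he : Tendsto e atTop (𝓝 0)) {N : ℕ} (h : ∀ n ≥ N + 1, mulSubCoeffs w e n = 0) :
    ∀ n ≥ N, e n = 0 := by
  have hstep : ∀ n ≥ N, ‖e (n + 1)‖ = ‖e n‖ := fun n hn => by
    have hrel : e n = w * e (n + 1) := by
      simpa [mulSubCoeffs, seqCons, sub_eq_zero] using h (n + 1) (by omega)
    rw [hrel, norm_mul, hw, one_mul]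
  intro n hn
  have hconst : ∀ k, ‖e (k + n)‖ = ‖e n‖ := fun k => by
    induction k with
    | zero => simp
    | succ k ih => rw [add_right_comm, hstep _ (by omega), ih]
  have hlim : Tendsto (fun k => ‖e (k + n)‖) atTop (𝓝 0) := by
    simpa using ((tendsto_add_atTop_iff_nat n).2 he).norm
  simp only [hconst, tendsto_const_nhds_iff] at hlim
  exact norm_eq_zero.1 hlim

theorem eq_zero_of_iterate_mulSubCoeffs_eq_zero {w : 𝕜} (hw : ‖w‖ = 1) (k : ℕ) :
    ∀ {e : ℕ → 𝕜} {N : ℕ}, Tendsto e atTop (𝓝 0) →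
      (∀ n ≥ N + k, (mulSubCoeffs w)^[k] e n = 0) → ∀ n ≥ N, e n = 0 := by
  induction k with
  | zero => exact fun _ h => h
  | succ k ih =>
    intro e N he h
    refine eq_zero_of_mulSubCoeffs_eq_zero hw he (ih ?_ fun n hn => ?_)
    · exact tendsto_mulSubCoeffs he
    · rw [← Function.iterate_succ_apply]
      exact h n (by omega)

end Shift

theorem eq_zero_of_sub_pow_mul_eq_eval {𝕜 : Type*} [NontriviallyNormedField 𝕜] {w : 𝕜}
    (hw : ‖w‖ = 1) {m : ℕ} {P : 𝕜[X]} (hP : P.degree < m) {e : ℕ → 𝕜} {φ : 𝕜 → 𝕜}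
    (he : Tendsto e atTop (𝓝 0)) (hφ : ∀ᶠ z in 𝓝 0, HasSum (fun n => e n * z ^ n) (φ z))
    (h : ∀ᶠ z in 𝓝 0, (z - w) ^ m * φ z = P.eval z) : e = 0 := by
  have hcoeff : (mulSubCoeffs w)^[m] e = fun n => P.coeff n :=
    eq_of_eventually_hasSum_mul_pow
      (hφ.mono fun z hz => hasSum_iterate_mulSubCoeffs_mul_pow hz m)
      (h.mono fun z hz => hz ▸ P.hasSum_coeff_mul_pow z)
  funext n
  refine eq_zero_of_iterate_mulSubCoeffs_eq_zero hw m he (N := 0) (fun k hk => ?_) n n.zero_le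
  rw [hcoeff]
  exact coeff_eq_zero_of_degree_lt (hP.trans_le (by exact_mod_cast (by omega : m ≤ k)))

theorem stmt14 (m : ℕ) (hm : 1 ≤ m) (w : ℂ) (hw : ‖w‖ = 1)
    (f g : ℂ → ℂ) (a : ℕ → ℂ) (c : ℕ → ℂ)
    (hc : Summable fun n => ‖c n‖ ^ 2)
    (hg : ∀ z ∈ Metric.ball (0 : ℂ) 1, HasSum (fun n => c n * z ^ n) (g z))
    (hf : ∀ z ∈ Metric.ball (0 : ℂ) 1,
      f z = (∑ j ∈ Finset.range m, a j * (z - w) ^ j) + (z - w) ^ m * g z) :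
    (∀ z ∈ Metric.ball (0 : ℂ) 1,
      z * f z = (a 0 * w + ∑ j ∈ Finset.Ico 1 m, (a (j - 1) + a j * w) * (z - w) ^ j)
        + (z - w) ^ m * (a (m - 1) + z * g z)) ∧
    ∀ (q : Polynomial ℂ) (h : ℂ → ℂ) (d : ℕ → ℂ), q.degree < (m : WithBot ℕ) →
      Summable (fun n => ‖d n‖ ^ 2) →
      (∀ z ∈ Metric.ball (0 : ℂ) 1, HasSum (fun n => d n * z ^ n) (h z)) →
      (∀ z ∈ Metric.ball (0 : ℂ) 1, z * f z = q.eval z + (z - w) ^ m * h z) →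
      ∑' n, ‖d n‖ ^ 2 = (∑' n, ‖c n‖ ^ 2) + ‖a (m - 1)‖ ^ 2 := by
  have hzf : ∀ z ∈ Metric.ball (0 : ℂ) 1,
      z * f z = (a 0 * w + ∑ j ∈ Finset.Ico 1 m, (a (j - 1) + a j * w) * (z - w) ^ j)
        + (z - w) ^ m * (a (m - 1) + z * g z) := fun z hz => by
    rw [hf z hz, mul_add, mul_sum_mul_sub_pow z w a hm]
    ring
  refine ⟨hzf, fun q h d hq hd hh hzq => ?_⟩
  let p : ℂ[X] := C (a 0 * w) + ∑ j ∈ Ico 1 m, C (a (j - 1) + a j * w) * (X - C w) ^ j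
  have hp : p.degree < m :=
    (degree_add_le _ _).trans_lt <| max_lt (degree_C_lt.trans_le (by exact_mod_cast hm)) <|
      degree_sum_C_mul_X_sub_C_pow_lt w _ fun j hj => (mem_Ico.1 hj).2
  have hball : Metric.ball (0 : ℂ) 1 ∈ 𝓝 0 := Metric.ball_mem_nhds 0 one_pos
  set b := seqCons (a (m - 1)) c
  have hlim : Tendsto (d - b) atTop (𝓝 0) := by
    have := (tendsto_zero_of_summable_norm_sq hd).sub
      (tendsto_seqCons (x := a (m - 1)) (tendsto_zero_of_summable_norm_sq hc))
    rwa [sub_zero] at this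
  have hsum : ∀ᶠ z in 𝓝 0,
      HasSum (fun n => (d - b) n * z ^ n) (h z - (a (m - 1) + z * g z)) :=
    eventually_of_mem hball fun z hz =>
      ((hh z hz).sub (hasSum_seqCons_mul_pow (hg z hz))).congr_fun fun n => sub_mul _ _ _
  have hdiff : ∀ᶠ z in 𝓝 0, (z - w) ^ m * (h z - (a (m - 1) + z * g z)) = (p - q).eval z :=
    eventually_of_mem hball fun z hz => by
      simp only [p, eval_sub, eval_add, eval_C, eval_finsetSum, eval_mul, eval_pow, eval_X]
      linear_combination hzf z hz - hzq z hz
  have hdb : d = b := sub_eq_zero.1 <| eq_zero_of_sub_pow_mul_eq_eval hw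
    ((degree_sub_le p q).trans_lt (max_lt hp hq)) hlim hsum hdiff
  rw [hdb, tsum_norm_sq_seqCons _ hc, add_comm]
end

section
/- Let m ∈ ℕ, w ∈ 𝕋, and f ∈ D_w^m, i.e., f = p + (z−w)^m g with deg p < m and g ∈ H². Then for each 0 ≤ j ≤ m−1, the j-th derivative f^{(j)}(z) converges to p^{(j)}(w) as z → w nontangentially (within any region Γ_α(w) = {z ∈ 𝔻 : |z−w| < α(1−|z|)}). -/
/-!
Square-summable Taylor coefficients give, by Cauchy–Schwarz against the geometric series,
`‖g z‖ ≤ C (1 - ‖z‖) ^ (-1/2)`; Cauchy's estimate on the circle of radius `(1 - ‖z‖) / 2` upgrades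
this to `‖g⁽ᵏ⁾ z‖ ≤ Cₖ (1 - ‖z‖) ^ (-k - 1/2)`. By Leibniz, `f⁽ʲ⁾ - p⁽ʲ⁾` is a combination of the
terms `(z - w) ^ (m - i) g⁽ʲ⁻ⁱ⁾ z`, and in `Γ_α(w)` we have `‖z - w‖ < α (1 - ‖z‖)`, so each term is
`O(‖z - w‖ ^ (m - j - 1/2))`, which tends to `0` because `j < m`.
-/

/-- `f` is (the analytic extension of) a function in the Hardy space `H²` of the unit disc:
its Taylor coefficients are square-summable. -/
def MemHardy2 (f : ℂ → ℂ) : Prop :=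
  ∃ a : ℕ → ℂ, Summable (fun n => ‖a n‖ ^ 2) ∧
    ∀ z ∈ Metric.ball (0 : ℂ) 1, HasSum (fun n => a n * z ^ n) (f z)

open Filter Metric Topology

section GrowthInDisc

variable {F : Type*} [NormedAddCommGroup F] [NormedSpace ℂ F]

theorem norm_deriv_le_of_norm_le_div_rpow {f : ℂ → F} {C γ : ℝ} (hγ : 0 ≤ γ)
    (hf : DifferentiableOn ℂ f (ball 0 1))
    (hC : ∀ z ∈ ball (0 : ℂ) 1, ‖f z‖ ≤ C / (1 - ‖z‖) ^ γ) {z : ℂ} (hz : z ∈ ball (0 : ℂ) 1) :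
    ‖deriv f z‖ ≤ 2 ^ (γ + 1) * C / (1 - ‖z‖) ^ (γ + 1) := by
  have hC0 : 0 ≤ C := by
    simpa using (le_div_iff₀ (Real.rpow_pos_of_pos (by rw [mem_ball_zero_iff] at hz; linarith) γ)).1
      ((norm_nonneg _).trans (hC z hz))
  rw [mem_ball_zero_iff] at hz
  set R := (1 - ‖z‖) / 2 with hR
  have hR0 : 0 < R := by rw [hR]; linarith
  have hsub : closedBall z R ⊆ ball 0 1 := fun ζ hζ => by
    rw [mem_closedBall_iff_norm] at hζ
    rw [mem_ball_zero_iff]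
    linarith [norm_le_norm_add_norm_sub' ζ z]
  have hsphere : ∀ ζ ∈ sphere z R, ‖f ζ‖ ≤ C / R ^ γ := fun ζ hζ => by
    have hRζ : R ≤ 1 - ‖ζ‖ := by
      rw [mem_sphere_iff_norm] at hζ
      linarith [norm_le_norm_add_norm_sub' ζ z]
    refine (hC ζ (hsub (sphere_subset_closedBall hζ))).trans ?_
    gcongr
  calc ‖deriv f z‖ ≤ C / R ^ γ / R :=
        Complex.norm_deriv_le_of_forall_mem_sphere_norm_le hR0 (hf.diffContOnCl_ball hsub) hsphere
    _ = 2 ^ (γ + 1) * C / (1 - ‖z‖) ^ (γ + 1) := by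
        rw [div_div, ← Real.rpow_add_one hR0.ne', hR, Real.div_rpow (by linarith) zero_le_two]
        field_simp

theorem exists_norm_iteratedDeriv_le_div_rpow [CompleteSpace F] {f : ℂ → F} {C γ : ℝ}
    (hγ : 0 ≤ γ) (hf : DifferentiableOn ℂ f (ball 0 1))
    (hC : ∀ z ∈ ball (0 : ℂ) 1, ‖f z‖ ≤ C / (1 - ‖z‖) ^ γ) (k : ℕ) :
    ∃ C', ∀ z ∈ ball (0 : ℂ) 1, ‖iteratedDeriv k f z‖ ≤ C' / (1 - ‖z‖) ^ (γ + k) := by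
  induction k with
  | zero => exact ⟨C, by simpa using hC⟩
  | succ k ih =>
    obtain ⟨C', hC'⟩ := ih
    have hfk : DifferentiableOn ℂ (iteratedDeriv k f) (ball 0 1) := by
      rw [iteratedDeriv_eq_iterate]
      exact ((hf.analyticOnNhd isOpen_ball).iterated_deriv k).differentiableOn
    refine ⟨2 ^ (γ + k + 1) * C', fun z hz => ?_⟩
    rw [iteratedDeriv_succ, Nat.cast_succ, ← add_assoc]
    exact norm_deriv_le_of_norm_le_div_rpow (by positivity) hfk hC' hz

def stolzRegion (w : ℂ) (α : ℝ) : Set ℂ := {z | ‖z‖ < 1 ∧ ‖z - w‖ < α * (1 - ‖z‖)}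

theorem tendsto_sub_pow_smul_nhdsWithin_stolzRegion {h : ℂ → F} {C γ α : ℝ} {w : ℂ} {e : ℕ}
    (hγ : 0 ≤ γ) (he : γ < e)
    (hC : ∀ z ∈ ball (0 : ℂ) 1, ‖h z‖ ≤ C / (1 - ‖z‖) ^ γ) :
    Tendsto (fun z => (z - w) ^ e • h z) (𝓝[stolzRegion w α] w) (𝓝 0) := by
  have hbound : ∀ z ∈ stolzRegion w α,
      ‖(z - w) ^ e • h z‖ ≤ C * α ^ γ * ‖z - w‖ ^ ((e : ℝ) - γ) := by
    rintro z ⟨hz, hzw⟩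
    have ht : 0 < 1 - ‖z‖ := by linarith
    have hC0 : 0 ≤ C := by
      simpa using (le_div_iff₀ (Real.rpow_pos_of_pos ht γ)).1
        ((norm_nonneg _).trans (hC z (mem_ball_zero_iff.2 hz)))
    have hratio : ‖z - w‖ / (1 - ‖z‖) ≤ α := (div_le_iff₀ ht).2 hzw.le
    calc ‖(z - w) ^ e • h z‖ = ‖z - w‖ ^ e * ‖h z‖ := by rw [norm_smul, norm_pow]
      _ ≤ ‖z - w‖ ^ e * (C / (1 - ‖z‖) ^ γ) := by
          gcongr
          exact hC z (mem_ball_zero_iff.2 hz)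
      _ = C * (‖z - w‖ / (1 - ‖z‖)) ^ γ * ‖z - w‖ ^ ((e : ℝ) - γ) := by
          rw [← Real.rpow_natCast, Real.div_rpow (norm_nonneg _) ht.le,
            show (e : ℝ) = ((e : ℝ) - γ) + γ by ring,
            Real.rpow_add' (norm_nonneg _) (by linarith), add_sub_cancel_right]
          ring
      _ ≤ C * α ^ γ * ‖z - w‖ ^ ((e : ℝ) - γ) := by gcongr
  have hlim : Tendsto (fun z : ℂ => C * α ^ γ * ‖z - w‖ ^ ((e : ℝ) - γ)) (𝓝 w) (𝓝 0) := by
    have hcont : Continuous fun z : ℂ => C * α ^ γ * ‖z - w‖ ^ ((e : ℝ) - γ) :=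
      continuous_const.mul ((continuous_norm.comp (continuous_id.sub continuous_const)).rpow_const
        fun _ => Or.inr (by linarith))
    simpa [Real.zero_rpow (by linarith : (e : ℝ) - γ ≠ 0)] using hcont.tendsto w
  exact squeeze_zero_norm' (eventually_nhdsWithin_of_forall hbound)
    (hlim.mono_left nhdsWithin_le_nhds)

end GrowthInDisc

theorem summable_and_tsum_mul_pow_le_of_summable_sq {x : ℕ → ℝ} (hx : ∀ n, 0 ≤ x n)
    (hx2 : Summable fun n => x n ^ 2) {r : ℝ} (hr0 : 0 ≤ r) (hr1 : r < 1) :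
    (Summable fun n => x n * r ^ n) ∧ ∑' n, x n * r ^ n ≤ √(∑' n, x n ^ 2) / √(1 - r) := by
  have hpow : ∀ n : ℕ, (r ^ n) ^ (2 : ℝ) = (r ^ 2) ^ n := fun n => by
    rw [Real.rpow_two, ← pow_mul, mul_comm, pow_mul]
  have hr2 : r ^ 2 < 1 := by nlinarith
  obtain ⟨hsum, hle⟩ := Real.summable_and_inner_le_Lp_mul_Lq_tsum_of_nonneg .two_two hx
    (fun n => pow_nonneg hr0 n) (by simpa only [Real.rpow_two] using hx2)
    (by simpa only [hpow] using summable_geometric_of_lt_one (sq_nonneg r) hr2)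
  simp only [hpow, Real.rpow_two, tsum_geometric_of_lt_one (sq_nonneg r) hr2,
    ← Real.sqrt_eq_rpow] at hle
  refine ⟨hsum, hle.trans ?_⟩
  rw [Real.sqrt_inv, div_eq_mul_inv]
  gcongr
  nlinarith

namespace MemHardy2

variable {g : ℂ → ℂ}

theorem differentiableOn (hg : MemHardy2 g) : DifferentiableOn ℂ g (ball 0 1) := by
  obtain ⟨a, ha, hsum⟩ := hg
  intro z hz
  rw [mem_ball_zero_iff] at hz
  set r := (1 + ‖z‖) / 2 with hr
  have hr0 : 0 ≤ r := by positivity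
  have hr1 : r < 1 := by rw [hr]; linarith
  have hzr : ‖z‖ < r := by rw [hr]; linarith
  have hdiff : DifferentiableOn ℂ (fun y => ∑' n, a n * y ^ n) (ball 0 r) :=
    Complex.differentiableOn_tsum_of_summable_norm
      (summable_and_tsum_mul_pow_le_of_summable_sq (fun n => norm_nonneg (a n)) ha hr0 hr1).1
      (fun n => ((differentiable_const _).mul (differentiable_pow n)).differentiableOn)
      isOpen_ball
      (fun n y hy => by
        rw [norm_mul, norm_pow]
        gcongr
        exact (mem_ball_zero_iff.1 hy).le)
  have heq : Set.EqOn g (fun y => ∑' n, a n * y ^ n) (ball 0 r) := fun y hy =>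
    (hsum y (ball_subset_ball hr1.le hy)).tsum_eq.symm
  exact ((hdiff.congr heq).differentiableAt
    (isOpen_ball.mem_nhds (mem_ball_zero_iff.2 hzr))).differentiableWithinAt

theorem exists_norm_le (hg : MemHardy2 g) :
    ∃ C, ∀ z ∈ ball (0 : ℂ) 1, ‖g z‖ ≤ C / (1 - ‖z‖) ^ (1 / 2 : ℝ) := by
  obtain ⟨a, ha, hsum⟩ := hg
  refine ⟨√(∑' n, ‖a n‖ ^ 2), fun z hz => ?_⟩
  obtain ⟨hs, hle⟩ := summable_and_tsum_mul_pow_le_of_summable_sq (fun n => norm_nonneg (a n)) ha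
    (norm_nonneg z) (mem_ball_zero_iff.1 hz)
  rw [← Real.sqrt_eq_rpow, ← (hsum z hz).tsum_eq]
  refine le_trans ?_ hle
  simpa only [norm_mul, norm_pow] using
    norm_tsum_le_tsum_norm (by simpa only [norm_mul, norm_pow] using hs :
      Summable fun n => ‖a n * z ^ n‖)

theorem exists_norm_iteratedDeriv_le (hg : MemHardy2 g) (k : ℕ) :
    ∃ C, ∀ z ∈ ball (0 : ℂ) 1, ‖iteratedDeriv k g z‖ ≤ C / (1 - ‖z‖) ^ (1 / 2 + k : ℝ) := by
  obtain ⟨C, hC⟩ := hg.exists_norm_le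
  exact exists_norm_iteratedDeriv_le_div_rpow (by norm_num) hg.differentiableOn hC k

theorem tendsto_sub_pow_mul_iteratedDeriv (hg : MemHardy2 g) {s e : ℕ} (hse : s < e) (w : ℂ)
    (α : ℝ) :
    Tendsto (fun z => (z - w) ^ e * iteratedDeriv s g z) (𝓝[stolzRegion w α] w) (𝓝 0) := by
  obtain ⟨C, hC⟩ := hg.exists_norm_iteratedDeriv_le s
  have hexp : (1 / 2 + s : ℝ) < e := by
    have : (s : ℝ) + 1 ≤ e := by exact_mod_cast hse
    linarith
  exact tendsto_sub_pow_smul_nhdsWithin_stolzRegion (by positivity) hexp hC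

end MemHardy2

theorem Polynomial.iteratedDeriv_eval {𝕜 : Type*} [NontriviallyNormedField 𝕜] (p : Polynomial 𝕜)
    (k : ℕ) : iteratedDeriv k (fun x => p.eval x) = fun x => (derivative^[k] p).eval x := by
  induction k with
  | zero => rfl
  | succ k ih =>
    funext x
    rw [iteratedDeriv_succ, ih, Function.iterate_succ_apply']
    exact Polynomial.deriv _

theorem iteratedDeriv_eval_add_sub_pow_mul (p : Polynomial ℂ) (w : ℂ) {g : ℂ → ℂ} {m j : ℕ}
    {z : ℂ} (hg : ContDiffAt ℂ j g z) :
    iteratedDeriv j (fun y => p.eval y + (y - w) ^ m * g y) z =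
      (Polynomial.derivative^[j] p).eval z + ∑ i ∈ Finset.range (j + 1),
        (j.choose i * m.descFactorial i : ℂ) * ((z - w) ^ (m - i) * iteratedDeriv (j - i) g z) := by
  have hp : ContDiffAt ℂ j (fun y => p.eval y) z := by
    simpa using (p.contDiff_aeval (𝕜 := ℂ) j).contDiffAt
  have hpow : ContDiffAt ℂ j (fun y : ℂ => (y - w) ^ m) z := by fun_prop
  rw [iteratedDeriv_fun_add hp (hpow.mul hg), iteratedDeriv_fun_mul hpow hg,
    Polynomial.iteratedDeriv_eval]
  congr 1
  refine Finset.sum_congr rfl fun i _ => ?_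
  simp only [iteratedDeriv_comp_sub_const (f := (· ^ m)), iteratedDeriv_pow]
  ring

theorem stmt15_general (m : ℕ) (w : ℂ) (p : Polynomial ℂ) (g : ℂ → ℂ) (hg : MemHardy2 g) (j : ℕ)
    (hj : j < m) (α : ℝ) :
    Filter.Tendsto (iteratedDeriv j (fun z => p.eval z + (z - w) ^ m * g z))
      (nhdsWithin w {z : ℂ | ‖z‖ < 1 ∧ ‖z - w‖ < α * (1 - ‖z‖)})
      (nhds (((Polynomial.derivative (R := ℂ))^[j] p).eval w)) := by
  show Tendsto _ (𝓝[stolzRegion w α] w) _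
  have hexpand : (fun z => (Polynomial.derivative^[j] p).eval z + ∑ i ∈ Finset.range (j + 1),
      (j.choose i * m.descFactorial i : ℂ) * ((z - w) ^ (m - i) * iteratedDeriv (j - i) g z))
      =ᶠ[𝓝[stolzRegion w α] w] iteratedDeriv j (fun z => p.eval z + (z - w) ^ m * g z) := by
    filter_upwards [self_mem_nhdsWithin] with z hz
    have hgz := hg.differentiableOn.analyticOnNhd isOpen_ball z (mem_ball_zero_iff.2 hz.1)
    exact (iteratedDeriv_eval_add_sub_pow_mul p w hgz.contDiffAt).symm
  have hsum : Tendsto (fun z => ∑ i ∈ Finset.range (j + 1),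
      (j.choose i * m.descFactorial i : ℂ) * ((z - w) ^ (m - i) * iteratedDeriv (j - i) g z))
      (𝓝[stolzRegion w α] w) (𝓝 0) := by
    simpa using tendsto_finsetSum (Finset.range (j + 1)) fun i hi =>
      (hg.tendsto_sub_pow_mul_iteratedDeriv (by rw [Finset.mem_range] at hi; omega) w α).const_mul
        (j.choose i * m.descFactorial i : ℂ)
  simpa using ((Polynomial.continuous _).tendsto w |>.mono_left nhdsWithin_le_nhds).add hsum
    |>.congr' hexpand

theorem stmt15 (m : ℕ) (w : ℂ) (hw : ‖w‖ = 1)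
    (p : Polynomial ℂ) (hp : p.degree < (m : WithBot ℕ))
    (g : ℂ → ℂ) (hg : MemHardy2 g) (j : ℕ) (hj : j < m) (α : ℝ) (hα : 0 < α) :
    Filter.Tendsto (iteratedDeriv j (fun z => p.eval z + (z - w) ^ m * g z))
      (nhdsWithin w {z : ℂ | ‖z‖ < 1 ∧ ‖z - w‖ < α * (1 - ‖z‖)})
      (nhds (((Polynomial.derivative (R := ℂ))^[j] p).eval w)) :=
  stmt15_general m w p g hg j hj α
end

section
/- Let L₀ be a contraction on a Hilbert space H, D* = (I − L₀L₀*)^{1/2}, P the orthogonal projection onto E* = ker L₀. Then for all z, w ∈ 𝔻: P(I − zL₀)⁻¹(I − w̄L₀*)⁻¹P restricted to E* equals (I_{E*} − B(z)B(w)*)/(1 − zw̄), where B(z) = zP(I − zL₀)⁻¹D*. -/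
/-!
Write `R = (1 - zL₀)⁻¹` and `Q = ((1 - wL₀)⁻¹)*`. From `R = 1 + zRL₀` and `Q = 1 + w̄L₀*Q` one gets
`RQ - zw̄ RL₀L₀*Q = Q + zRL₀`, and compressing by `P` kills `PL₀*` and `L₀P`, leaving
`PRQP - zw̄ PRL₀L₀*QP = P`. Substituting `L₀L₀* = 1 - D*²` turns this into the claimed identity.
-/

open ContinuousLinearMap

section CompressedResolvent

variable {A : Type*}

theorem mul_resolvent_mul_resolvent_mul_eq_self [Ring A] {p r q a b : A}
    (hp : p * p = p) (hap : a * p = 0) (hpb : p * b = 0)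
    (hr : r * (1 - a) = 1) (hq : (1 - b) * q = 1) :
    p * r * q * p - p * r * a * b * q * p = p := by
  have hrq : r * q - r * a * b * q = q + r * a :=
    calc r * q - r * a * b * q = r * (1 - a) * q + r * a * ((1 - b) * q) := by noncomm_ring
      _ = q + r * a := by rw [hr, hq]; noncomm_ring
  calc p * r * q * p - p * r * a * b * q * p = p * (r * q - r * a * b * q) * p := by noncomm_ring
    _ = p * ((1 - b) * q) * p + p * b * q * p + p * r * (a * p) := by rw [hrq]; noncomm_ring
    _ = p := by rw [hq, hpb, hap]; simp [hp]

theorem one_sub_mul_star_smul_compression_eq [Ring A] [StarRing A] [Algebra ℂ A]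
    [StarModule ℂ A] {l d p r r' : A} (hp : IsSelfAdjoint p) (hp2 : p * p = p)
    (hlp : l * p = 0) (hd : IsSelfAdjoint d) (hd2 : d * d = 1 - l * star l)
    (z w : ℂ) (hr : r * (1 - z • l) = 1) (hr' : r' * (1 - w • l) = 1) :
    (1 - z * star w) • (p * r * star r' * p) =
      p - (z • (p * r * d)) * star (w • (p * r' * d)) := by
  have hpl : p * star l = 0 := by simpa [star_mul, hp.star_eq] using congrArg star hlp
  have hq : (1 - star w • star l) * star r' = 1 := by
    simpa [star_mul, star_sub, star_smul] using congrArg star hr'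
  have key := mul_resolvent_mul_resolvent_mul_eq_self hp2
    (by rw [smul_mul_assoc, hlp, smul_zero]) (by rw [mul_smul_comm, hpl, smul_zero]) hr hq
  simp only [smul_mul_assoc, mul_smul_comm, smul_smul] at key
  have hdd : p * r * d * (d * (star r' * p)) =
      p * r * star r' * p - p * r * l * star l * star r' * p := by
    rw [show p * r * d * (d * (star r' * p)) = p * r * (d * d) * star r' * p by noncomm_ring, hd2]
    noncomm_ring
  rw [star_smul, star_mul, star_mul, hp.star_eq, hd.star_eq, smul_mul_smul_comm, hdd]
  linear_combination (norm := module) key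

end CompressedResolvent

theorem stmt16_general {H : Type*} [NormedAddCommGroup H] [InnerProductSpace ℂ H] [CompleteSpace H]
    (L₀ Dstar P : H →L[ℂ] H)
    (hDpos : Dstar.IsPositive)
    (hDsq : Dstar ∘L Dstar = 1 - L₀ ∘L adjoint L₀)
    (hPsa : IsSelfAdjoint P) (hPidem : P ∘L P = P)
    (hPran : LinearMap.range (P : H →ₗ[ℂ] H) = LinearMap.ker (L₀ : H →ₗ[ℂ] H))
    (z w : ℂ)
    (Rz Rw : H →L[ℂ] H)
    (hRz1 : Rz ∘L (1 - z • L₀) = 1)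
    (hRw1 : Rw ∘L (1 - w • L₀) = 1) :
    (1 - z * (starRingEnd ℂ w)) • (P ∘L Rz ∘L adjoint Rw ∘L P) =
      P - (z • (P ∘L Rz ∘L Dstar)) ∘L adjoint (w • (P ∘L Rw ∘L Dstar)) := by
  have hLP : L₀ ∘L P = 0 := by
    ext x
    exact LinearMap.congr_fun (LinearMap.range_le_ker_iff.mp hPran.le) x
  simp only [← mul_def, ← star_eq_adjoint, starRingEnd_apply] at *
  exact one_sub_mul_star_smul_compression_eq hPsa hPidem hLP hDpos.isSelfAdjoint hDsq z w hRz1 hRw1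

theorem stmt16 {H : Type*} [NormedAddCommGroup H] [InnerProductSpace ℂ H] [CompleteSpace H]
    (L₀ Dstar P : H →L[ℂ] H) (hL : ‖L₀‖ ≤ 1)
    (hDpos : Dstar.IsPositive)
    (hDsq : Dstar ∘L Dstar = 1 - L₀ ∘L adjoint L₀)
    (hPsa : IsSelfAdjoint P) (hPidem : P ∘L P = P)
    (hPran : LinearMap.range (P : H →ₗ[ℂ] H) = LinearMap.ker (L₀ : H →ₗ[ℂ] H))
    (z w : ℂ) (hz : ‖z‖ < 1) (hw : ‖w‖ < 1)
    (Rz Rw : H →L[ℂ] H)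
    (hRz1 : Rz ∘L (1 - z • L₀) = 1) (hRz2 : (1 - z • L₀) ∘L Rz = 1)
    (hRw1 : Rw ∘L (1 - w • L₀) = 1) (hRw2 : (1 - w • L₀) ∘L Rw = 1) :
    (1 - z * (starRingEnd ℂ w)) • (P ∘L Rz ∘L adjoint Rw ∘L P) =
      P - (z • (P ∘L Rz ∘L Dstar)) ∘L adjoint (w • (P ∘L Rw ∘L Dstar)) :=
  stmt16_general L₀ Dstar P hDpos hDsq hPsa hPidem hPran z w Rz Rw hRz1 hRw1
end

section
/- Let B : 𝔻 → B(D,E) be an operator-valued Schur function (analytic with ‖B(z)‖ ≤ 1) with B(0) = 0, and 0 < c < 1. Then the kernel (1 − c z w̄)(I − B(z)B(w)*)/(1 − z w̄) is positive definite if and only if the kernel (I − B(z)B(w)*)/(1 − z w̄) − (c/(1−c)) B(z)B(w)* is positive definite. -/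
open ContinuousLinearMap
open scoped ComplexOrder

/-! Off the line `z w̄ = 1` the second kernel minus `I` is `(1 - c)⁻¹` times the first kernel
minus `I`, and both kernels equal `I` where `z = 0` or `w = 0` because `B 0 = 0`. For such
kernels `K` is positive definite iff `K - I` is: the Gram form of `K - I` at the points
`(zᵢ, xᵢ)` is the Gram form of `K` at the points `(0, -∑ xᵢ), (zᵢ, xᵢ)`, and it differs from
the Gram form of `K` at `(zᵢ, xᵢ)` by `‖∑ xᵢ‖²`. -/

/-- A `B(E)`-valued kernel on the unit disc is positive definite. -/
def PosDefKer {E : Type*} [NormedAddCommGroup E] [InnerProductSpace ℂ E]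
    (K : ℂ → ℂ → E →L[ℂ] E) : Prop :=
  ∀ (n : ℕ) (z : Fin n → ℂ), (∀ i, z i ∈ Metric.ball (0 : ℂ) 1) →
    ∀ x : Fin n → E, 0 ≤ ∑ i, ∑ j, (inner ℂ (x j) (K (z i) (z j) (x i)) : ℂ)

section PosDefKer

variable {E : Type*} [NormedAddCommGroup E] [InnerProductSpace ℂ E]

lemma sum_sum_inner_sub_one (K : ℂ → ℂ → E →L[ℂ] E) {n : ℕ} (z : Fin n → ℂ) (x : Fin n → E) :
    ∑ i, ∑ j, (inner ℂ (x j) ((K (z i) (z j) - 1) (x i)) : ℂ) =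
      ∑ i, ∑ j, (inner ℂ (x j) (K (z i) (z j) (x i)) : ℂ) - inner ℂ (∑ i, x i) (∑ i, x i) := by
  simp only [sub_apply, one_apply_eq_self, inner_sub_right, Finset.sum_sub_distrib, sum_inner,
    inner_sum]

lemma sum_sum_inner_cons_zero (K : ℂ → ℂ → E →L[ℂ] E) (hz0 : ∀ z, K z 0 = 1)
    (h0w : ∀ w, K 0 w = 1) {n : ℕ} (z : Fin n → ℂ) (x : Fin n → E) :
    ∑ i, ∑ j, (inner ℂ ((Fin.cons (-∑ i, x i) x : Fin (n + 1) → E) j)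
        (K ((Fin.cons 0 z : Fin (n + 1) → ℂ) i) ((Fin.cons 0 z : Fin (n + 1) → ℂ) j)
          ((Fin.cons (-∑ i, x i) x : Fin (n + 1) → E) i)) : ℂ) =
      ∑ i, ∑ j, (inner ℂ (x j) (K (z i) (z j) (x i)) : ℂ) - inner ℂ (∑ i, x i) (∑ i, x i) := by
  simp only [Fin.sum_univ_succ, Fin.cons_zero, Fin.cons_succ, hz0, h0w, one_apply_eq_self]
  rw [Finset.sum_add_distrib, ← sum_inner, ← inner_sum]
  simp only [inner_neg_left, inner_neg_right, neg_neg]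
  ring

lemma posDefKer_iff_sub_one (K : ℂ → ℂ → E →L[ℂ] E) (hz0 : ∀ z, K z 0 = 1)
    (h0w : ∀ w, K 0 w = 1) : PosDefKer K ↔ PosDefKer (fun z w => K z w - 1) := by
  constructor
  · intro h n z hz x
    have hz' : ∀ i, (Fin.cons 0 z : Fin (n + 1) → ℂ) i ∈ Metric.ball (0 : ℂ) 1 :=
      Fin.cases (by simp) hz
    simpa only [sum_sum_inner_sub_one, sum_sum_inner_cons_zero K hz0 h0w] using
      h (n + 1) _ hz' (Fin.cons (-∑ i, x i) x)
  · intro h n z hz x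
    have hsub := h n z hz x
    rw [sum_sum_inner_sub_one, sub_nonneg] at hsub
    exact ((isPositive_one (𝕜 := ℂ)).inner_nonneg_right _).trans hsub

lemma posDefKer_iff_of_eqOn_smul {K K' : ℂ → ℂ → E →L[ℂ] E} {a : ℝ} (ha : 0 < a)
    (hK : ∀ z ∈ Metric.ball (0 : ℂ) 1, ∀ w ∈ Metric.ball (0 : ℂ) 1, K' z w = (a : ℂ) • K z w) :
    PosDefKer K ↔ PosDefKer K' := by
  have hform : ∀ n (z : Fin n → ℂ), (∀ i, z i ∈ Metric.ball (0 : ℂ) 1) → ∀ x : Fin n → E,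
      ∑ i, ∑ j, (inner ℂ (x j) (K' (z i) (z j) (x i)) : ℂ) =
        a * ∑ i, ∑ j, (inner ℂ (x j) (K (z i) (z j) (x i)) : ℂ) := by
    intro n z hz x
    simp only [hK _ (hz _) _ (hz _), smul_apply, inner_smul_right, Finset.mul_sum]
  have ha' : (0 : ℂ) < a := Complex.zero_lt_real.mpr ha
  refine forall₄_congr fun n z hz x => ?_
  rw [hform n z hz x]
  simpa using (mul_le_mul_iff_right₀ (b := 0) ha').symm

end PosDefKer

lemma one_sub_mul_conj_ne_zero {z w : ℂ} (hz : z ∈ Metric.ball (0 : ℂ) 1)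
    (hw : w ∈ Metric.ball (0 : ℂ) 1) : 1 - z * starRingEnd ℂ w ≠ 0 := by
  rw [mem_ball_zero_iff] at hz hw
  have : ‖z * starRingEnd ℂ w‖ < 1 := by
    rw [norm_mul, Complex.norm_conj]
    exact mul_lt_one_of_nonneg_of_lt_one_left (norm_nonneg z) hz hw.le
  intro h
  rw [← sub_eq_zero.mp h, norm_one] at this
  exact this.false

lemma one_div_smul_sub_smul_sub_eq {M : Type*} [AddCommGroup M] [Module ℂ M] (I T : M)
    {c s : ℂ} (hc : 1 - c ≠ 0) (hs : 1 - s ≠ 0) :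
    ((1 / (1 - s)) • (I - T) - (c / (1 - c)) • T) - I =
      (1 - c)⁻¹ • (((1 - c * s) / (1 - s)) • (I - T) - I) := by
  match_scalars
  · field_simp; ring
  · field_simp; ring

theorem stmt17_general {D E : Type*} [NormedAddCommGroup D] [InnerProductSpace ℂ D] [CompleteSpace D]
    [NormedAddCommGroup E] [InnerProductSpace ℂ E] [CompleteSpace E]
    (B : ℂ → D →L[ℂ] E) (hB0 : B 0 = 0)
    (c : ℝ) (hc1 : c < 1) :
    PosDefKer (fun z w => ((1 - (c : ℂ) * (z * (starRingEnd ℂ w))) / (1 - z * (starRingEnd ℂ w))) •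
        ((1 : E →L[ℂ] E) - B z ∘L adjoint (B w))) ↔
      PosDefKer (fun z w => ((1 : ℂ) / (1 - z * (starRingEnd ℂ w))) •
          ((1 : E →L[ℂ] E) - B z ∘L adjoint (B w)) -
        (((c / (1 - c) : ℝ)) : ℂ) • (B z ∘L adjoint (B w))) := by
  have hc : 0 < 1 - c := sub_pos.mpr hc1
  refine (posDefKer_iff_sub_one _ (by simp [hB0]) (by simp [hB0])).trans <|
    (posDefKer_iff_of_eqOn_smul (a := (1 - c)⁻¹) (inv_pos.mpr hc) fun z hz w hw => ?_).trans
      (posDefKer_iff_sub_one _ (by simp [hB0]) (by simp [hB0])).symm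
  push_cast
  exact one_div_smul_sub_smul_sub_eq _ _ (by exact_mod_cast hc.ne')
    (one_sub_mul_conj_ne_zero hz hw)

theorem stmt17 {D E : Type*} [NormedAddCommGroup D] [InnerProductSpace ℂ D] [CompleteSpace D]
    [NormedAddCommGroup E] [InnerProductSpace ℂ E] [CompleteSpace E]
    (B : ℂ → D →L[ℂ] E) (hB : DifferentiableOn ℂ B (Metric.ball 0 1))
    (hB1 : ∀ z ∈ Metric.ball (0 : ℂ) 1, ‖B z‖ ≤ 1) (hB0 : B 0 = 0)
    (c : ℝ) (hc0 : 0 < c) (hc1 : c < 1) :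
    PosDefKer (fun z w => ((1 - (c : ℂ) * (z * (starRingEnd ℂ w))) / (1 - z * (starRingEnd ℂ w))) •
        ((1 : E →L[ℂ] E) - B z ∘L adjoint (B w))) ↔
      PosDefKer (fun z w => ((1 : ℂ) / (1 - z * (starRingEnd ℂ w))) •
          ((1 : E →L[ℂ] E) - B z ∘L adjoint (B w)) -
        (((c / (1 - c) : ℝ)) : ℂ) • (B z ∘L adjoint (B w))) :=
  stmt17_general B hB0 c hc1
end
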